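/- arXiv:1301.1434 — 10 statements merged into one kernel-verified Lean document; each statement's English description precedes it below -/
import Mathlib

section
/- For every real number w > 0, one has 0 < I₁(w)/I₀(w) < min(w/2, 1); equivalently, the derivative of log I₀ satisfies 0 < (log I₀)'(w) < min(w/2, 1). -/
/-!
With `x = w / 2` and `u k = x ^ k / k!` (`powDivFactorial x k`), the two series read `I₀(w) = ∑ u k ^ 2` and
`I₁(w) = ∑ u k * u (k + 1)`. Since `u (k + 1) = x * u k / (k + 1)`, comparing termwise gives
`0 < I₁(w) < x * I₀(w)`, and `u k * u (k + 1) ≤ (u k ^ 2 + u (k + 1) ^ 2) / 2` summed over `k`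
gives `I₁(w) ≤ I₀(w) - u 0 ^ 2 / 2 = I₀(w) - 1 / 2`.
-/

open Real

/-- The modified Bessel function of the first kind of order zero,
`I0(w) = sum_k w^(2k) / (4^k (k!)^2)`. -/
noncomputable def besselI0 (w : ℝ) : ℝ :=
  ∑' k : ℕ, w ^ (2 * k) / (4 ^ k * (k.factorial : ℝ) ^ 2)

/-- The modified Bessel function of the first kind of order one (the derivative of `besselI0`),
`I1(w) = sum_k w^(2k+1) / (2^(2k+1) k! (k+1)!)`. -/
noncomputable def besselI1 (w : ℝ) : ℝ :=
  ∑' k : ℕ, w ^ (2 * k + 1) / (2 ^ (2 * k + 1) * (k.factorial : ℝ) * ((k + 1).factorial : ℝ))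

open scoped Nat

theorem summable_mul_succ_of_summable_sq {u : ℕ → ℝ} (hu : Summable fun k => u k ^ 2) :
    Summable fun k => u k * u (k + 1) :=
  .of_norm_bounded ((hu.add ((summable_nat_add_iff 1).mpr hu)).div_const 2) fun k => by
    rw [Real.norm_eq_abs, abs_mul, ← sq_abs (u k), ← sq_abs (u (k + 1))]
    linarith [two_mul_le_add_sq |u k| |u (k + 1)|]

theorem tsum_mul_succ_le {u : ℕ → ℝ} (hu : Summable fun k => u k ^ 2) :
    ∑' k, u k * u (k + 1) ≤ ∑' k, u k ^ 2 - u 0 ^ 2 / 2 := by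
  have hshift : Summable fun k => u (k + 1) ^ 2 := (summable_nat_add_iff 1).mpr hu
  calc ∑' k, u k * u (k + 1) ≤ ∑' k, (u k ^ 2 + u (k + 1) ^ 2) / 2 :=
        (summable_mul_succ_of_summable_sq hu).tsum_le_tsum
          (fun k => by linarith [two_mul_le_add_sq (u k) (u (k + 1))]) ((hu.add hshift).div_const 2)
    _ = (∑' k, u k ^ 2 + ∑' k, u (k + 1) ^ 2) / 2 := by rw [tsum_div_const, hu.tsum_add hshift]
    _ = ∑' k, u k ^ 2 - u 0 ^ 2 / 2 := by rw [hu.tsum_eq_zero_add]; ring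

noncomputable def powDivFactorial (x : ℝ) (k : ℕ) : ℝ := x ^ k / k !

section powDivFactorial

variable (x : ℝ)

@[simp]
theorem powDivFactorial_zero : powDivFactorial x 0 = 1 := by simp [powDivFactorial]

theorem powDivFactorial_succ (k : ℕ) :
    powDivFactorial x (k + 1) = x * powDivFactorial x k / (k + 1) := by
  simp only [powDivFactorial, Nat.factorial_succ, pow_succ, Nat.cast_mul, Nat.cast_succ]
  field_simp

theorem powDivFactorial_pos {x : ℝ} (hx : 0 < x) (k : ℕ) : 0 < powDivFactorial x k := by
  unfold powDivFactorial; positivity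

theorem summable_powDivFactorial_sq : Summable fun k => powDivFactorial x k ^ 2 := by
  refine (Real.summable_pow_div_factorial (x ^ 2)).of_nonneg_of_le (fun k => sq_nonneg _)
    fun k => ?_
  have hfact : (1 : ℝ) ≤ k ! := Nat.one_le_cast.mpr k.factorial_pos
  rw [powDivFactorial, div_pow, ← pow_mul, mul_comm k 2, pow_mul]
  exact div_le_div_of_nonneg_left (by positivity) (by positivity) (le_self_pow₀ hfact two_ne_zero)

end powDivFactorial

theorem besselI0_two_mul (x : ℝ) : besselI0 (2 * x) = ∑' k, powDivFactorial x k ^ 2 := by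
  unfold besselI0 powDivFactorial
  congr 1; funext k
  rw [mul_pow, pow_mul, pow_mul]
  field_simp
  norm_num
  ring

theorem besselI1_two_mul (x : ℝ) :
    besselI1 (2 * x) = ∑' k, powDivFactorial x k * powDivFactorial x (k + 1) := by
  unfold besselI1 powDivFactorial
  congr 1; funext k
  rw [mul_pow]
  field_simp
  ring

theorem besselI1_le_besselI0_sub_half (w : ℝ) : besselI1 w ≤ besselI0 w - 1 / 2 := by
  obtain ⟨x, rfl⟩ : ∃ x, w = 2 * x := ⟨w / 2, by ring⟩
  simpa only [besselI0_two_mul, besselI1_two_mul, powDivFactorial_zero, one_pow] using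
    tsum_mul_succ_le (summable_powDivFactorial_sq x)

theorem besselI1_pos {w : ℝ} (hw : 0 < w) : 0 < besselI1 w := by
  obtain ⟨x, rfl⟩ : ∃ x, w = 2 * x := ⟨w / 2, by ring⟩
  have hx : 0 < x := by linarith
  have hpos k : 0 < powDivFactorial x k * powDivFactorial x (k + 1) :=
    mul_pos (powDivFactorial_pos hx k) (powDivFactorial_pos hx (k + 1))
  rw [besselI1_two_mul]
  exact (summable_mul_succ_of_summable_sq (summable_powDivFactorial_sq x)).tsum_pos
    (fun k => (hpos k).le) 0 (hpos 0)

theorem besselI1_lt_half_mul_besselI0 {w : ℝ} (hw : 0 < w) : besselI1 w < w / 2 * besselI0 w := by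
  obtain ⟨x, rfl⟩ : ∃ x, w = 2 * x := ⟨w / 2, by ring⟩
  have hx : 0 < x := by linarith
  have hterm (k : ℕ) : powDivFactorial x k * powDivFactorial x (k + 1)
      = x * powDivFactorial x k ^ 2 / (k + 1) := by
    rw [powDivFactorial_succ]; ring
  have hsq := summable_powDivFactorial_sq x
  rw [besselI0_two_mul, besselI1_two_mul, mul_div_cancel_left₀ x two_ne_zero, ← tsum_mul_left]
  refine (summable_mul_succ_of_summable_sq hsq).tsum_lt_tsum (i := 1) (fun k => ?_) ?_
    (hsq.mul_left x)
  · rw [hterm]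
    exact div_le_self (by positivity) (by linarith [k.cast_nonneg (α := ℝ)])
  · have hpos : 0 < x * powDivFactorial x 1 ^ 2 := by
      have := powDivFactorial_pos hx 1; positivity
    rw [hterm, Nat.cast_one]; linarith

/-- For every `w > 0`, `0 < I1(w)/I0(w) < min (w/2) 1`. -/
theorem besselI1_div_besselI0_pos_lt_min (w : ℝ) (hw : 0 < w) :
    0 < besselI1 w / besselI0 w ∧ besselI1 w / besselI0 w < min (w / 2) 1 := by
  have hI1 := besselI1_pos hw
  have hI1_le := besselI1_le_besselI0_sub_half w
  have hI0 : 0 < besselI0 w := by linarith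
  refine ⟨div_pos hI1 hI0, lt_min ?_ ?_⟩
  · rw [div_lt_iff₀ hI0]
    exact besselI1_lt_half_mul_besselI0 hw
  · rw [div_lt_one hI0]
    linarith
end

section
/- For every real number w > 0, one has 0 < log I₀(w) < min(w²/4, w). -/
open Real

lemma real_exp_tsum (x : ℝ) : Real.exp x = ∑' n : ℕ, x ^ n / (n.factorial : ℝ) := by
  rw [Real.exp_eq_exp_ℝ, NormedSpace.exp_eq_tsum_div]

lemma fact_two_mul_le (k : ℕ) : ((2 * k).factorial : ℕ) ≤ 4 ^ k * k.factorial ^ 2 := by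
  induction k with
  | zero => simp
  | succ n ih =>
    have h1 : 2 * (n + 1) = 2 * n + 1 + 1 := by ring
    rw [h1, Nat.factorial_succ, Nat.factorial_succ]
    calc (2 * n + 1 + 1) * ((2 * n + 1) * (2 * n).factorial)
        ≤ (2 * n + 2) * ((2 * n + 2) * (4 ^ n * n.factorial ^ 2)) := by
          apply Nat.mul_le_mul (by omega)
          exact Nat.mul_le_mul (by omega) ih
      _ = 4 ^ (n + 1) * ((n + 1) * n.factorial) ^ 2 := by ring

/-- For every `w > 0`, `0 < log I0(w) < min (w^2/4) w`. -/
theorem log_besselI0_pos_lt_min (w : ℝ) (hw : 0 < w) :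
    0 < Real.log (besselI0 w) ∧ Real.log (besselI0 w) < min (w ^ 2 / 4) w := by
  set f : ℕ → ℝ := fun k => w ^ (2 * k) / (4 ^ k * (k.factorial : ℝ) ^ 2) with hf
  set h : ℕ → ℝ := fun n => w ^ n / (n.factorial : ℝ) with hh
  have hsum_h : Summable h := Real.summable_pow_div_factorial w
  have hpos_h : ∀ n, 0 < h n := fun n =>
    div_pos (pow_pos hw n) (by positivity)
  have hfh : ∀ k, f k ≤ h (2 * k) := by
    intro k
    apply div_le_div_of_nonneg_left (by positivity) (by positivity)
    have := fact_two_mul_le k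
    calc ((2 * k).factorial : ℝ) ≤ ((4 ^ k * k.factorial ^ 2 : ℕ) : ℝ) := by exact_mod_cast this
      _ = 4 ^ k * (k.factorial : ℝ) ^ 2 := by push_cast; ring
  have hpos_f : ∀ k, 0 < f k := fun k => div_pos (pow_pos hw _) (by positivity)
  have hsum_he : Summable (fun k => h (2 * k)) :=
    hsum_h.comp_injective (fun a b hab => by omega)
  have hsum_ho : Summable (fun k => h (2 * k + 1)) :=
    hsum_h.comp_injective (fun a b hab => by omega)
  have hsum_f : Summable f :=
    Summable.of_nonneg_of_le (fun k => (hpos_f k).le) hfh hsum_he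
  -- besselI0 w = tsum f
  have hI0 : besselI0 w = ∑' k, f k := rfl
  -- lower bound: 1 < I0
  have h1 : (1 : ℝ) + w ^ 2 / 4 ≤ besselI0 w := by
    have := Summable.sum_le_tsum (Finset.range 2) (fun k _ => (hpos_f k).le) hsum_f
    rw [hI0]
    refine le_trans (le_of_eq ?_) this
    rw [Finset.sum_range_succ, Finset.sum_range_one]
    norm_num [hf, Nat.factorial]
  have hI0_gt1 : 1 < besselI0 w := by nlinarith [sq_nonneg w]
  have hI0_pos : 0 < besselI0 w := lt_trans one_pos hI0_gt1
  refine ⟨Real.log_pos hI0_gt1, lt_min ?_ ?_⟩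
  · -- log I0 < w^2/4
    rw [Real.log_lt_iff_lt_exp hI0_pos, real_exp_tsum (w ^ 2 / 4), hI0]
    have key : ∀ k, f k = (w ^ 2 / 4) ^ k / ((k.factorial : ℝ)) ^ 2 := by
      intro k
      rw [hf]
      simp only [pow_mul]
      rw [div_pow]
      ring
    apply Summable.tsum_lt_tsum_of_nonneg (fun k => (hpos_f k).le)
    · intro k
      rw [key k]
      apply div_le_div_of_nonneg_left (by positivity) (by positivity)
      have h1 : (1 : ℝ) ≤ (k.factorial : ℝ) := by exact_mod_cast k.factorial_pos
      nlinarith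
    · show f 2 < (w ^ 2 / 4) ^ 2 / (Nat.factorial 2 : ℝ)
      rw [key 2]
      have : (0 : ℝ) < (w ^ 2 / 4) ^ 2 := by positivity
      rw [div_lt_div_iff₀ (by norm_num [Nat.factorial]) (by norm_num [Nat.factorial])]
      norm_num [Nat.factorial]
      nlinarith
    · exact (Real.summable_pow_div_factorial (w ^ 2 / 4))
  · -- log I0 < w
    rw [Real.log_lt_iff_lt_exp hI0_pos, hI0]
    have step1 : ∑' k, f k ≤ ∑' k, h (2 * k) :=
      Summable.tsum_le_tsum hfh hsum_f hsum_he
    have step2 : ∑' k, h (2 * k) + ∑' k, h (2 * k + 1) = Real.exp w := by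
      rw [real_exp_tsum w]
      exact tsum_even_add_odd hsum_he hsum_ho
    have step3 : 0 < ∑' k, h (2 * k + 1) := by
      have := Summable.le_tsum hsum_ho 0 (fun k _ => (hpos_h _).le)
      calc (0 : ℝ) < h 1 := hpos_h 1
        _ = h (2 * 0 + 1) := by norm_num
        _ ≤ _ := this
    linarith
end

section
/- For all real numbers a > b ≥ 0, one has I₁(a)·I₀(b) − I₀(a)·I₁(b) > 0. Consequently the function w ↦ I₁(w)/I₀(w) is strictly increasing on [0, ∞) and takes the value 0 at w = 0. -/
open Real

section BesselAux
open Finset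

noncomputable def bT0 (w : ℝ) (k : ℕ) : ℝ := w ^ (2 * k) / (4 ^ k * (k.factorial : ℝ) ^ 2)
noncomputable def bT1 (w : ℝ) (k : ℕ) : ℝ :=
  w ^ (2 * k + 1) / (2 ^ (2 * k + 1) * (k.factorial : ℝ) * ((k + 1).factorial : ℝ))

lemma bT0_nonneg (w : ℝ) (k : ℕ) : 0 ≤ bT0 w k := by
  unfold bT0
  apply div_nonneg
  · rw [pow_mul]; positivity
  · positivity

lemma bT1_nonneg {w : ℝ} (hw : 0 ≤ w) (k : ℕ) : 0 ≤ bT1 w k := by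
  unfold bT1; positivity

lemma summable_bT0 (w : ℝ) : Summable (bT0 w) := by
  refine Summable.of_nonneg_of_le (bT0_nonneg w) (fun k => ?_)
    (Real.summable_pow_div_factorial (w ^ 2 / 4))
  · 
    unfold bT0
    rw [pow_mul, div_pow]
    rw [div_div]
    apply div_le_div_of_nonneg_left (by positivity) (by positivity)
    have h1 : (1 : ℝ) ≤ (k.factorial : ℝ) := by exact_mod_cast k.factorial_pos
    calc (4:ℝ) ^ k * (k.factorial:ℝ) = 4 ^ k * k.factorial * 1 := by ring
    _ ≤ 4 ^ k * k.factorial * k.factorial := by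
        apply mul_le_mul_of_nonneg_left h1 (by positivity)
    _ = 4 ^ k * (k.factorial:ℝ)^2 := by ring

lemma summable_bT1 {w : ℝ} (hw : 0 ≤ w) : Summable (bT1 w) := by
  refine Summable.of_nonneg_of_le (bT1_nonneg hw) (fun k => ?_)
    ((Real.summable_pow_div_factorial (w ^ 2 / 4)).mul_left w)
  unfold bT1
  have hrw : w * ((w ^ 2 / 4) ^ k / k.factorial) = w ^ (2 * k + 1) / (4 ^ k * k.factorial) := by
    rw [pow_add, pow_mul, pow_one, div_pow]; ring
  rw [hrw]
  apply div_le_div_of_nonneg_left (by positivity) (by positivity)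
  have h1 : (1 : ℝ) ≤ ((k + 1).factorial : ℝ) := by exact_mod_cast (k + 1).factorial_pos
  have h2 : (4 : ℝ) ^ k ≤ 2 ^ (2 * k + 1) := by
    have he : (2:ℝ) ^ (2 * k + 1) = 4 ^ k * 2 := by
      rw [pow_succ, pow_mul]; norm_num
    rw [he]
    nlinarith [pow_pos (by norm_num : (0:ℝ) < 4) k]
  have h3 : (0:ℝ) < k.factorial := by exact_mod_cast k.factorial_pos
  calc (4:ℝ) ^ k * (k.factorial : ℝ) ≤ 2 ^ (2 * k + 1) * (k.factorial : ℝ) := by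
        apply mul_le_mul_of_nonneg_right h2 h3.le
    _ = 2 ^ (2 * k + 1) * (k.factorial : ℝ) * 1 := by ring
    _ ≤ 2 ^ (2 * k + 1) * (k.factorial : ℝ) * ((k + 1).factorial : ℝ) := by
        apply mul_le_mul_of_nonneg_left h1 (by positivity)

noncomputable def bK (N : ℕ) : ℝ :=
  (2 ^ (2 * N + 1) * (N.factorial : ℝ) * ((N + 1).factorial : ℝ))⁻¹

noncomputable def bU (N : ℕ) (a b : ℝ) (k : ℕ) : ℝ := (N.choose k : ℝ) * a ^ (N - k) * b ^ k

lemma bK_pos (N : ℕ) : 0 < bK N := by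
  unfold bK
  have h1 : (0:ℝ) < N.factorial := by exact_mod_cast N.factorial_pos
  have h2 : (0:ℝ) < (N+1).factorial := by exact_mod_cast (N+1).factorial_pos
  positivity

lemma coeffA {N k : ℕ} (h : k ≤ N) (a b : ℝ) :
    bT1 a (N - k) * bT0 b k
      = bK N * (N.choose k : ℝ) * (((N + 1).choose k : ℝ))
        * (a ^ (2 * (N - k) + 1) * b ^ (2 * k)) := by
  have h1 := Nat.choose_mul_factorial_mul_factorial h
  have h2 := Nat.choose_mul_factorial_mul_factorial (h.trans (Nat.le_succ N))
  have h3 : N + 1 - k = (N - k) + 1 := by omega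
  rw [h3] at h2
  have hc1 : (N.choose k : ℝ) * (k.factorial : ℝ) * ((N - k).factorial : ℝ)
      = (N.factorial : ℝ) := by exact_mod_cast congrArg (Nat.cast (R := ℝ)) h1
  have hc2 : ((N + 1).choose k : ℝ) * (k.factorial : ℝ) * (((N - k) + 1).factorial : ℝ)
      = ((N + 1).factorial : ℝ) := by exact_mod_cast congrArg (Nat.cast (R := ℝ)) h2
  have hp : (2 : ℝ) ^ (2 * N + 1) = 2 ^ (2 * (N - k) + 1) * 4 ^ k := by
    have : (4 : ℝ) = 2 ^ 2 := by norm_num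
    rw [this, ← pow_mul, ← pow_add]
    congr 1
    omega
  have key : ((2:ℝ) ^ (2 * (N - k) + 1) * ((N - k).factorial : ℝ) * (((N - k) + 1).factorial : ℝ))
      * ((4:ℝ) ^ k * (k.factorial : ℝ) ^ 2) * ((N.choose k : ℝ) * ((N + 1).choose k : ℝ))
      = 2 ^ (2 * N + 1) * (N.factorial : ℝ) * ((N + 1).factorial : ℝ) := by
    calc _ = ((2:ℝ) ^ (2 * (N - k) + 1) * 4 ^ k)
          * (((N.choose k : ℝ) * (k.factorial : ℝ) * ((N - k).factorial : ℝ))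
            * (((N + 1).choose k : ℝ) * (k.factorial : ℝ) * (((N - k) + 1).factorial : ℝ))) := by
          ring
      _ = _ := by rw [hc1, hc2, ← hp]; ring
  unfold bT1 bT0 bK
  have hd1 : ((2:ℝ) ^ (2 * (N - k) + 1) * ((N - k).factorial : ℝ) * (((N - k) + 1).factorial : ℝ)) ≠ 0 := by
    have h1' : (0:ℝ) < (N - k).factorial := by exact_mod_cast (N - k).factorial_pos
    have h2' : (0:ℝ) < ((N - k) + 1).factorial := by exact_mod_cast ((N - k) + 1).factorial_pos
    positivity
  have hd2 : ((4:ℝ) ^ k * (k.factorial : ℝ) ^ 2) ≠ 0 := by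
    have h1' : (0:ℝ) < k.factorial := by exact_mod_cast k.factorial_pos
    positivity
  have hd3 : ((2:ℝ) ^ (2 * N + 1) * (N.factorial : ℝ) * ((N + 1).factorial : ℝ)) ≠ 0 := by
    have h1' : (0:ℝ) < N.factorial := by exact_mod_cast N.factorial_pos
    have h2' : (0:ℝ) < (N + 1).factorial := by exact_mod_cast (N + 1).factorial_pos
    positivity
  field_simp
  linear_combination (-(a ^ (2 * (N - k) + 1) * b ^ (2 * k))) * key

lemma coeffB {N k : ℕ} (h : k ≤ N) (a b : ℝ) :
    bT0 a (N - k) * bT1 b k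
      = bK N * (N.choose k : ℝ) * (((N + 1).choose (k + 1) : ℝ))
        * (a ^ (2 * (N - k)) * b ^ (2 * k + 1)) := by
  have h1 := Nat.choose_mul_factorial_mul_factorial h
  have h2 := Nat.choose_mul_factorial_mul_factorial (Nat.succ_le_succ h)
  have h3 : N + 1 - (k + 1) = N - k := by omega
  rw [h3] at h2
  have hc1 : (N.choose k : ℝ) * (k.factorial : ℝ) * ((N - k).factorial : ℝ)
      = (N.factorial : ℝ) := by exact_mod_cast congrArg (Nat.cast (R := ℝ)) h1
  have hc2 : ((N + 1).choose (k + 1) : ℝ) * ((k + 1).factorial : ℝ) * ((N - k).factorial : ℝ)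
      = ((N + 1).factorial : ℝ) := by exact_mod_cast congrArg (Nat.cast (R := ℝ)) h2
  have hp : (2 : ℝ) ^ (2 * N + 1) = 4 ^ (N - k) * 2 ^ (2 * k + 1) := by
    have h4 : (4 : ℝ) = 2 ^ 2 := by norm_num
    rw [h4, ← pow_mul, ← pow_add]
    congr 1
    omega
  have key : ((4:ℝ) ^ (N - k) * ((N - k).factorial : ℝ) ^ 2)
      * ((2:ℝ) ^ (2 * k + 1) * (k.factorial : ℝ) * ((k + 1).factorial : ℝ))
      * ((N.choose k : ℝ) * ((N + 1).choose (k + 1) : ℝ))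
      = 2 ^ (2 * N + 1) * (N.factorial : ℝ) * ((N + 1).factorial : ℝ) := by
    calc _ = ((4:ℝ) ^ (N - k) * 2 ^ (2 * k + 1))
          * (((N.choose k : ℝ) * (k.factorial : ℝ) * ((N - k).factorial : ℝ))
            * (((N + 1).choose (k + 1) : ℝ) * ((k + 1).factorial : ℝ) * ((N - k).factorial : ℝ))) := by
          ring
      _ = _ := by rw [hc1, hc2, ← hp]; ring
  unfold bT1 bT0 bK
  have ha1 : (0:ℝ) < (N - k).factorial := by exact_mod_cast (N - k).factorial_pos
  have ha2 : (0:ℝ) < k.factorial := by exact_mod_cast k.factorial_pos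
  have ha3 : (0:ℝ) < (k + 1).factorial := by exact_mod_cast (k + 1).factorial_pos
  have ha4 : (0:ℝ) < N.factorial := by exact_mod_cast N.factorial_pos
  have ha5 : (0:ℝ) < (N + 1).factorial := by exact_mod_cast (N + 1).factorial_pos
  have hd1 : ((4:ℝ) ^ (N - k) * ((N - k).factorial : ℝ) ^ 2) ≠ 0 := by positivity
  have hd2 : ((2:ℝ) ^ (2 * k + 1) * (k.factorial : ℝ) * ((k + 1).factorial : ℝ)) ≠ 0 := by positivity
  have hd3 : ((2:ℝ) ^ (2 * N + 1) * (N.factorial : ℝ) * ((N + 1).factorial : ℝ)) ≠ 0 := by positivity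
  field_simp
  linear_combination (-(a ^ (2 * (N - k)) * b ^ (2 * k + 1))) * key

lemma bU_top (N : ℕ) (a b : ℝ) : bU N a b (N + 1) = 0 := by
  simp [bU, Nat.choose_succ_self]

lemma Ceq2 (N : ℕ) (a b : ℝ) :
    ∑ k ∈ range (N + 1),
        (N.choose k : ℝ) * (((N + 1).choose (k + 1) : ℝ)) * (a ^ (2 * (N - k)) * b ^ (2 * k + 1))
      = b * (∑ k ∈ range (N + 1), (bU N a b k) ^ 2)
        + a * ∑ k ∈ range (N + 1), bU N a b k * bU N a b (k + 1) := by
  rw [Finset.mul_sum, Finset.mul_sum, ← Finset.sum_add_distrib]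
  refine Finset.sum_congr rfl fun k hk => ?_
  have hkN : k ≤ N := Nat.lt_succ_iff.mp (Finset.mem_range.mp hk)
  rcases eq_or_lt_of_le hkN with hEq | hlt
  · subst hEq
    simp [bU, Nat.choose_succ_self, Nat.sub_self]
    ring
  · have h1 : k + 1 ≤ N := hlt
    obtain ⟨m, hm1, hm2⟩ : ∃ m, N - k = m + 1 ∧ N - (k + 1) = m := ⟨N - k - 1, by omega, by omega⟩
    rw [Nat.choose_succ_succ']
    unfold bU
    rw [hm1, hm2]
    push_cast
    ring

lemma Ceq1 (N : ℕ) (a b : ℝ) :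
    ∑ k ∈ range (N + 1),
        (N.choose k : ℝ) * (((N + 1).choose k : ℝ)) * (a ^ (2 * (N - k) + 1) * b ^ (2 * k))
      = a * (∑ k ∈ range (N + 1), (bU N a b k) ^ 2)
        + b * ∑ k ∈ range (N + 1), bU N a b k * bU N a b (k + 1) := by
  have hlast : ∑ k ∈ range (N + 1), bU N a b k * bU N a b (k + 1)
      = ∑ k ∈ range N, bU N a b k * bU N a b (k + 1) := by
    rw [Finset.sum_range_succ, bU_top, mul_zero, add_zero]
  rw [hlast, Finset.sum_range_succ' (fun k => (N.choose k : ℝ) * (((N + 1).choose k : ℝ))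
    * (a ^ (2 * (N - k) + 1) * b ^ (2 * k))), Finset.sum_range_succ' (fun k => (bU N a b k) ^ 2)]
  have h0 : (N.choose 0 : ℝ) * (((N + 1).choose 0 : ℝ)) * (a ^ (2 * (N - 0) + 1) * b ^ (2 * 0))
      = a * (bU N a b 0) ^ 2 := by
    simp [bU]
    ring
  have hterm : ∀ k ∈ range N,
      (N.choose (k + 1) : ℝ) * (((N + 1).choose (k + 1) : ℝ))
        * (a ^ (2 * (N - (k + 1)) + 1) * b ^ (2 * (k + 1)))
      = a * (bU N a b (k + 1)) ^ 2 + b * (bU N a b k * bU N a b (k + 1)) := by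
    intro k hk
    have hkN : k + 1 ≤ N := Nat.succ_le_of_lt (Finset.mem_range.mp hk)
    obtain ⟨m, hm1, hm2⟩ : ∃ m, N - k = m + 1 ∧ N - (k + 1) = m := ⟨N - k - 1, by omega, by omega⟩
    rw [Nat.choose_succ_succ']
    unfold bU
    rw [hm1, hm2]
    push_cast
    ring
  rw [Finset.sum_congr rfl hterm, Finset.sum_add_distrib, h0, mul_add, Finset.mul_sum,
    Finset.mul_sum]
  ring

lemma sum_sq_bound (n : ℕ) (u : ℕ → ℝ) (hu : u (n + 1) = 0) :
    ∑ k ∈ range (n + 1), u k * u (k + 1) ≤ ∑ k ∈ range (n + 1), u k ^ 2 := by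
  have h2 : ∑ k ∈ range (n + 1), u (k + 1) ^ 2 ≤ ∑ k ∈ range (n + 1), u k ^ 2 := by
    have h1 := Finset.sum_range_succ' (fun k => u k ^ 2) (n + 1)
    have h3 : ∑ k ∈ range (n + 1 + 1), u k ^ 2 = ∑ k ∈ range (n + 1), u k ^ 2 := by
      rw [Finset.sum_range_succ, hu]
      simp
    simp only [h3] at h1
    nlinarith [sq_nonneg (u 0)]
  calc ∑ k ∈ range (n + 1), u k * u (k + 1)
      ≤ ∑ k ∈ range (n + 1), (u k ^ 2 + u (k + 1) ^ 2) / 2 := by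
        apply Finset.sum_le_sum
        intro k _
        nlinarith [sq_nonneg (u k - u (k + 1))]
    _ = ((∑ k ∈ range (n + 1), u k ^ 2) + ∑ k ∈ range (n + 1), u (k + 1) ^ 2) / 2 := by
        rw [← Finset.sum_add_distrib, ← Finset.sum_div]
    _ ≤ _ := by linarith

lemma groupEq (N : ℕ) (a b : ℝ) :
    (∑ k ∈ range (N + 1), bT1 a k * bT0 b (N - k))
      - ∑ k ∈ range (N + 1), bT0 a k * bT1 b (N - k)
    = bK N * ((a - b) *
        ((∑ k ∈ range (N + 1), (bU N a b k) ^ 2)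
          - ∑ k ∈ range (N + 1), bU N a b k * bU N a b (k + 1))) := by
  have hS1 : (∑ k ∈ range (N + 1), bT1 a k * bT0 b (N - k))
      = bK N * (a * (∑ k ∈ range (N + 1), (bU N a b k) ^ 2)
          + b * ∑ k ∈ range (N + 1), bU N a b k * bU N a b (k + 1)) := by
    rw [← Ceq1, Finset.mul_sum]
    rw [← Finset.sum_range_reflect (fun k => bT1 a k * bT0 b (N - k)) (N + 1)]
    refine Finset.sum_congr rfl fun k hk => ?_
    have hkN : k ≤ N := Nat.lt_succ_iff.mp (Finset.mem_range.mp hk)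
    have h1 : N + 1 - 1 - k = N - k := by omega
    have h2 : N - (N - k) = k := by omega
    rw [h1, h2, coeffA hkN]
    ring
  have hS2 : (∑ k ∈ range (N + 1), bT0 a k * bT1 b (N - k))
      = bK N * (b * (∑ k ∈ range (N + 1), (bU N a b k) ^ 2)
          + a * ∑ k ∈ range (N + 1), bU N a b k * bU N a b (k + 1)) := by
    rw [← Ceq2, Finset.mul_sum]
    rw [← Finset.sum_range_reflect (fun k => bT0 a k * bT1 b (N - k)) (N + 1)]
    refine Finset.sum_congr rfl fun k hk => ?_
    have hkN : k ≤ N := Nat.lt_succ_iff.mp (Finset.mem_range.mp hk)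
    have h1 : N + 1 - 1 - k = N - k := by omega
    have h2 : N - (N - k) = k := by omega
    rw [h1, h2, coeffB hkN]
    ring
  rw [hS1, hS2]
  ring

lemma group_nonneg {a b : ℝ} (hb : 0 ≤ b) (hab : b ≤ a) (N : ℕ) :
    0 ≤ (∑ k ∈ range (N + 1), bT1 a k * bT0 b (N - k))
      - ∑ k ∈ range (N + 1), bT0 a k * bT1 b (N - k) := by
  rw [groupEq]
  have h1 : 0 ≤ (∑ k ∈ range (N + 1), (bU N a b k) ^ 2)
      - ∑ k ∈ range (N + 1), bU N a b k * bU N a b (k + 1) := by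
    have := sum_sq_bound N (bU N a b) (bU_top N a b)
    linarith
  have := bK_pos N
  have h2 : 0 ≤ a - b := by linarith
  positivity

lemma group_zero_pos {a b : ℝ} (hab : b < a) :
    0 < (∑ k ∈ range (0 + 1), bT1 a k * bT0 b (0 - k))
      - ∑ k ∈ range (0 + 1), bT0 a k * bT1 b (0 - k) := by
  rw [groupEq]
  have h1 : bU 0 a b 0 = 1 := by simp [bU]
  have h2 : bU 0 a b 1 = 0 := bU_top 0 a b
  simp [h1, h2]
  have := bK_pos 0
  have h3 : 0 < a - b := by linarith
  nlinarith

lemma besselI0_eq (w : ℝ) : besselI0 w = ∑' k, bT0 w k := rfl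
lemma besselI1_eq (w : ℝ) : besselI1 w = ∑' k, bT1 w k := rfl

lemma besselI0_pos (w : ℝ) : 0 < besselI0 w := by
  rw [besselI0_eq]
  refine Summable.tsum_pos (summable_bT0 w) (bT0_nonneg w) 0 ?_
  simp [bT0]

lemma bessel_key {a b : ℝ} (hb : 0 ≤ b) (hab : b < a) :
    0 < besselI1 a * besselI0 b - besselI0 a * besselI1 b := by
  have ha : 0 ≤ a := hb.trans hab.le
  have hfa : Summable fun k => ‖bT1 a k‖ :=
    (summable_bT1 ha).congr fun k => (Real.norm_of_nonneg (bT1_nonneg ha k)).symm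
  have hfb : Summable fun k => ‖bT1 b k‖ :=
    (summable_bT1 hb).congr fun k => (Real.norm_of_nonneg (bT1_nonneg hb k)).symm
  have hga : Summable fun k => ‖bT0 a k‖ :=
    (summable_bT0 a).congr fun k => (Real.norm_of_nonneg (bT0_nonneg a k)).symm
  have hgb : Summable fun k => ‖bT0 b k‖ :=
    (summable_bT0 b).congr fun k => (Real.norm_of_nonneg (bT0_nonneg b k)).symm
  have key1 : besselI1 a * besselI0 b
      = ∑' n, ∑ k ∈ range (n + 1), bT1 a k * bT0 b (n - k) := by
    rw [besselI1_eq, besselI0_eq]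
    exact tsum_mul_tsum_eq_tsum_sum_range_of_summable_norm hfa hgb
  have key2 : besselI0 a * besselI1 b
      = ∑' n, ∑ k ∈ range (n + 1), bT0 a k * bT1 b (n - k) := by
    rw [besselI1_eq, besselI0_eq]
    exact tsum_mul_tsum_eq_tsum_sum_range_of_summable_norm hga hfb
  have hs1 : Summable fun n => ∑ k ∈ range (n + 1), bT1 a k * bT0 b (n - k) :=
    (summable_norm_sum_mul_range_of_summable_norm hfa hgb).of_norm
  have hs2 : Summable fun n => ∑ k ∈ range (n + 1), bT0 a k * bT1 b (n - k) :=
    (summable_norm_sum_mul_range_of_summable_norm hga hfb).of_norm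
  rw [key1, key2, ← Summable.tsum_sub hs1 hs2]
  refine Summable.tsum_pos (hs1.sub hs2) (fun n => group_nonneg hb hab.le n) 0 (group_zero_pos hab)


end BesselAux

/-- For `a > b ≥ 0`, `I1(a)I0(b) − I0(a)I1(b) > 0`; consequently `w ↦ I1(w)/I0(w)` is
strictly increasing on `[0, ∞)` and takes the value `0` at `w = 0`. -/
theorem besselI1_div_besselI0_strictMonoOn :
    (∀ a b : ℝ, 0 ≤ b → b < a → 0 < besselI1 a * besselI0 b - besselI0 a * besselI1 b) ∧
    StrictMonoOn (fun w => besselI1 w / besselI0 w) (Set.Ici 0) ∧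
    besselI1 0 / besselI0 0 = 0 := by
  refine ⟨fun a b hb hab => bessel_key hb hab, ?_, ?_⟩
  · intro x hx y _ hxy
    simp only
    rw [div_lt_div_iff₀ (besselI0_pos x) (besselI0_pos y)]
    have := bessel_key hx hxy
    nlinarith
  · have h1 : besselI1 0 = 0 := by
      rw [besselI1_eq]
      have hz : ∀ k : ℕ, bT1 0 k = 0 := fun k => by simp [bT1]
      rw [tsum_congr hz, tsum_zero]
    rw [h1, zero_div]
end

section
/- For every real number w ≥ 0, the second derivative of log I₀ satisfies 0 < (log I₀)''(w) ≤ 1/2. -/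
open Real

/-!
Write `T(w) = I₁(w)/w`, an entire function. Since `I₀' = I₁` and `I₁' = I₀ - T`,
`(log I₀)'' = N / I₀²` with `N = I₀ (I₀ - T) - w² T²`. Expanding `I₀²`, `I₀ T` and `T²` as Cauchy
products in powers of `w²` and evaluating the convolved coefficients with Vandermonde's identity,
all three are multiples of the coefficients `cₙ > 0` of `I₀² = ∑ cₙ w²ⁿ`, and they combine to
`N = ∑ cₙ w²ⁿ / (2 (n + 1)²)`. Comparing termwise, `1/2 = c₀/2 ≤ N ≤ I₀²/2`.
-/

open scoped Nat
open Finset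

theorem hasDerivAt_tsum_mul_pow {𝕜 : Type*} [NontriviallyNormedField 𝕜] [IsRCLikeNormedField 𝕜]
    {c : ℕ → 𝕜} {e : ℕ → ℕ}
    (hc : ∀ r : ℝ, 0 ≤ r → Summable fun k => ‖c k‖ * e k * r ^ e k) {x : 𝕜}
    (hx : Summable fun k => c k * x ^ e k) :
    HasDerivAt (fun y => ∑' k, c k * y ^ e k) (∑' k, c k * (e k * x ^ (e k - 1))) x := by
  let _ : RCLike 𝕜 := IsRCLikeNormedField.rclike 𝕜
  set R := ‖x‖ + 1
  have hR : 1 ≤ R := by simp [R]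
  have hxR : x ∈ Metric.ball 0 R := by simp [R]
  refine hasDerivAt_tsum_of_isPreconnected (hc R (by positivity)) Metric.isOpen_ball
    (convex_ball 0 R).isPreconnected (fun k y _ => (hasDerivAt_pow (e k) y).const_mul (c k))
    (fun k y hy => ?_) hxR hx hxR
  have hy : ‖y‖ ≤ R := (mem_ball_zero_iff.mp hy).le
  calc ‖c k * (e k * y ^ (e k - 1))‖ = ‖c k‖ * e k * ‖y‖ ^ (e k - 1) := by
        simp [norm_mul, norm_pow, mul_assoc]
    _ ≤ ‖c k‖ * e k * R ^ e k := by
        gcongr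
        exact (pow_le_pow_left₀ (norm_nonneg y) hy _).trans (pow_le_pow_right₀ hR (Nat.sub_le _ _))

theorem hasSum_tsum_mul_pow_mul_tsum_mul_pow {R : Type*} [NormedCommRing R] [CompleteSpace R]
    {c d : ℕ → R} {x : R} (hc : Summable fun k => ‖c k * x ^ k‖)
    (hd : Summable fun k => ‖d k * x ^ k‖) :
    HasSum (fun n => (∑ p ∈ antidiagonal n, c p.1 * d p.2) * x ^ n)
      ((∑' k, c k * x ^ k) * ∑' k, d k * x ^ k) := by
  have hterm : ∀ n, ∑ p ∈ antidiagonal n, c p.1 * x ^ p.1 * (d p.2 * x ^ p.2) =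
      (∑ p ∈ antidiagonal n, c p.1 * d p.2) * x ^ n := fun n => by
    rw [sum_mul]
    refine sum_congr rfl fun p hp => ?_
    rw [← mem_antidiagonal.mp hp, pow_add]
    ring
  rw [tsum_mul_tsum_eq_tsum_sum_antidiagonal_of_summable_norm hc hd]
  simp only [hterm]
  exact ((summable_norm_sum_mul_antidiagonal_of_summable_norm hc hd).of_norm.congr hterm).hasSum

theorem inv_factorial_mul_factorial_eq {K : Type*} [Field K] [CharZero K] {a b n : ℕ}
    (h : a + b = n) :
    ((a ! * b ! : K))⁻¹ = n.choose a / n ! := by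
  subst h
  rw [Nat.cast_add_choose, div_div_cancel_left' (Nat.cast_ne_zero.2 (Nat.factorial_ne_zero _))]

theorem sum_antidiagonal_inv_factorial {K : Type*} [Field K] [CharZero K] (n p q : ℕ) :
    ∑ x ∈ antidiagonal n, ((x.1 ! * (x.2 + p)! * (x.2 ! * (x.1 + q)!) : K))⁻¹ =
      (2 * n + p + q)! / (n ! * (n + p + q)! * (n + p)! * (n + q)!) := by
  have hterm : ∀ x ∈ antidiagonal n, ((x.1 ! * (x.2 + p)! * (x.2 ! * (x.1 + q)!) : K))⁻¹ =
      ((n + p).choose x.1 * (n + q).choose x.2 : ℕ) / ((n + p)! * (n + q)!) := by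
    intro x hx
    rw [HasAntidiagonal.mem_antidiagonal] at hx
    rw [mul_inv, inv_factorial_mul_factorial_eq (by omega : x.1 + (x.2 + p) = n + p),
      inv_factorial_mul_factorial_eq (by omega : x.2 + (x.1 + q) = n + q)]
    push_cast
    ring
  have hchoose : ((2 * n + p + q).choose n : K) = (2 * n + p + q)! / (n ! * (n + p + q)!) := by
    rw [show 2 * n + p + q = n + (n + p + q) by ring, Nat.cast_add_choose]
  rw [sum_congr rfl hterm, ← sum_div, ← Nat.cast_sum, ← Nat.add_choose_eq,
    show n + p + (n + q) = 2 * n + p + q by ring, hchoose]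
  field_simp

theorem hasSum_tsum_mul_tsum_mul_even_pow {c d : ℕ → ℝ} (hc0 : ∀ k, 0 ≤ c k) (hd0 : ∀ k, 0 ≤ d k)
    {w : ℝ} (hc : Summable fun k => c k * w ^ (2 * k)) (hd : Summable fun k => d k * w ^ (2 * k)) :
    HasSum (fun n => (∑ p ∈ antidiagonal n, c p.1 * d p.2) * (w ^ 2) ^ n)
      ((∑' k, c k * w ^ (2 * k)) * ∑' k, d k * w ^ (2 * k)) := by
  simp only [pow_mul] at hc hd ⊢
  refine hasSum_tsum_mul_pow_mul_tsum_mul_pow (hc.congr fun k => ?_) (hd.congr fun k => ?_)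
  · exact (Real.norm_of_nonneg (mul_nonneg (hc0 k) (by positivity))).symm
  · exact (Real.norm_of_nonneg (mul_nonneg (hd0 k) (by positivity))).symm

noncomputable def besselI0Coeff (k : ℕ) : ℝ := (4 ^ k * (k ! : ℝ) ^ 2)⁻¹

noncomputable def besselI1Coeff (k : ℕ) : ℝ := (2 ^ (2 * k + 1) * k ! * (k + 1)! : ℝ)⁻¹

theorem besselI0Coeff_pos (k : ℕ) : 0 < besselI0Coeff k := by
  unfold besselI0Coeff; positivity

theorem besselI1Coeff_pos (k : ℕ) : 0 < besselI1Coeff k := by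
  unfold besselI1Coeff; positivity

theorem two_mul_succ_mul_besselI1Coeff (k : ℕ) :
    2 * (k + 1) * besselI1Coeff k = besselI0Coeff k := by
  unfold besselI0Coeff besselI1Coeff
  push_cast [Nat.factorial_succ, pow_succ, pow_mul]
  field_simp
  ring

theorem two_mul_succ_mul_besselI0Coeff_succ (k : ℕ) :
    2 * (k + 1) * besselI0Coeff (k + 1) = besselI1Coeff k := by
  unfold besselI0Coeff besselI1Coeff
  push_cast [Nat.factorial_succ, pow_succ, pow_mul]
  field_simp
  ring

theorem summable_succ_mul_besselI0Coeff_mul_pow {x : ℝ} (hx : 0 ≤ x) :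
    Summable fun k => (k + 1) * besselI0Coeff k * x ^ k := by
  refine ((summable_pow_div_factorial (x / 4)).mul_left 2).of_nonneg_of_le
    (fun k => by have := besselI0Coeff_pos k; positivity) fun k => ?_
  have hk : (k + 1 : ℝ) ≤ 2 * k ! := by
    have h1 : (1 : ℝ) ≤ k ! := by exact_mod_cast k.factorial_pos
    have h2 : (k : ℝ) ≤ k ! := by exact_mod_cast k.self_le_factorial
    linarith
  have hfac : (0 : ℝ) < k ! := by positivity
  calc (k + 1) * besselI0Coeff k * x ^ k = (k + 1) / k ! * ((x / 4) ^ k / k !) := by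
        rw [besselI0Coeff, div_pow]; field_simp
    _ ≤ 2 * ((x / 4) ^ k / k !) := by
        gcongr
        rwa [div_le_iff₀ hfac]

theorem summable_besselI0Coeff_mul_pow (x : ℝ) :
    Summable fun k => besselI0Coeff k * x ^ (2 * k) := by
  refine (summable_succ_mul_besselI0Coeff_mul_pow (sq_nonneg x)).of_nonneg_of_le
    (fun k => mul_nonneg (besselI0Coeff_pos k).le ((even_two_mul k).pow_nonneg x)) fun k => ?_
  rw [pow_mul, mul_assoc]
  exact le_mul_of_one_le_left (by have := besselI0Coeff_pos k; positivity) (by simp)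

theorem summable_besselI1Coeff_mul_pow (x : ℝ) :
    Summable fun k => besselI1Coeff k * x ^ (2 * k) := by
  refine (summable_besselI0Coeff_mul_pow x).of_nonneg_of_le
    (fun k => mul_nonneg (besselI1Coeff_pos k).le ((even_two_mul k).pow_nonneg x)) fun k => ?_
  rw [← two_mul_succ_mul_besselI1Coeff, mul_assoc]
  exact le_mul_of_one_le_left
    (mul_nonneg (besselI1Coeff_pos k).le ((even_two_mul k).pow_nonneg x)) (by linarith)

theorem besselI0_eq_tsum (w : ℝ) : besselI0 w = ∑' k, besselI0Coeff k * w ^ (2 * k) :=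
  tsum_congr fun k => by rw [besselI0Coeff, div_eq_inv_mul]

/-- The entire function equal to `besselI1 w / w` for `w ≠ 0`. -/
noncomputable def besselI1Div (w : ℝ) : ℝ := ∑' k, besselI1Coeff k * w ^ (2 * k)

theorem besselI1_eq_mul (w : ℝ) : besselI1 w = w * besselI1Div w := by
  rw [besselI1Div, ← tsum_mul_left]
  exact tsum_congr fun k => by rw [besselI1Coeff, pow_succ]; ring

theorem one_le_besselI0 (w : ℝ) : 1 ≤ besselI0 w := by
  rw [besselI0_eq_tsum]
  calc (1 : ℝ) = besselI0Coeff 0 * w ^ (2 * 0) := by simp [besselI0Coeff]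
    _ ≤ _ := (summable_besselI0Coeff_mul_pow w).le_tsum 0 fun k _ =>
      mul_nonneg (besselI0Coeff_pos k).le ((even_two_mul k).pow_nonneg w)

theorem besselI0Coeff_succ_mul_deriv_pow (k : ℕ) (x : ℝ) :
    besselI0Coeff (k + 1) * ((2 * (k + 1) : ℕ) * x ^ (2 * (k + 1) - 1)) =
      x * (besselI1Coeff k * x ^ (2 * k)) := by
  rw [← two_mul_succ_mul_besselI0Coeff_succ, show 2 * (k + 1) - 1 = 2 * k + 1 by omega, pow_succ]
  push_cast
  ring

theorem hasDerivAt_besselI0 (x : ℝ) : HasDerivAt besselI0 (besselI1 x) x := by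
  have hderiv := hasDerivAt_tsum_mul_pow (c := besselI0Coeff) (e := fun k => 2 * k)
    (fun r _ => ((summable_succ_mul_besselI0Coeff_mul_pow (sq_nonneg r)).mul_left 2)
      |>.of_nonneg_of_le (fun k => by positivity) fun k => ?_)
    (summable_besselI0Coeff_mul_pow x)
  · rw [funext besselI0_eq_tsum, besselI1_eq_mul, besselI1Div, ← tsum_mul_left]
    refine hderiv.congr_deriv ?_
    rw [tsum_eq_zero_add' (f := fun k => besselI0Coeff k * ((2 * k : ℕ) * x ^ (2 * k - 1)))
      (((summable_besselI1Coeff_mul_pow x).mul_left x).congr fun k =>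
        (besselI0Coeff_succ_mul_deriv_pow k x).symm)]
    simp only [mul_zero, Nat.cast_zero, zero_mul, zero_add, besselI0Coeff_succ_mul_deriv_pow]
  · have ha := besselI0Coeff_pos k
    rw [Real.norm_of_nonneg ha.le, pow_mul]
    push_cast
    nlinarith [mul_nonneg ha.le (pow_nonneg (sq_nonneg r) k)]

theorem hasDerivAt_besselI1 (x : ℝ) :
    HasDerivAt besselI1 (besselI0 x - besselI1Div x) x := by
  have hderiv := hasDerivAt_tsum_mul_pow (c := besselI1Coeff) (e := fun k => 2 * k + 1)
    (fun r hr => ((summable_succ_mul_besselI0Coeff_mul_pow (sq_nonneg r)).mul_left r)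
      |>.of_nonneg_of_le (fun k => by positivity) fun k => ?_)
    (((summable_besselI1Coeff_mul_pow x).mul_left x).congr fun k => by ring)
  · have hI1 : besselI1 = fun y => ∑' k, besselI1Coeff k * y ^ (2 * k + 1) :=
      funext fun y => tsum_congr fun k => by rw [besselI1Coeff, div_eq_inv_mul]
    rw [hI1, besselI0_eq_tsum, besselI1Div,
      ← (summable_besselI0Coeff_mul_pow x).tsum_sub (summable_besselI1Coeff_mul_pow x)]
    refine hderiv.congr_deriv (tsum_congr fun k => ?_)
    rw [← two_mul_succ_mul_besselI1Coeff, Nat.add_sub_cancel]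
    push_cast
    ring
  · rw [Real.norm_of_nonneg (besselI1Coeff_pos k).le, ← two_mul_succ_mul_besselI1Coeff, pow_succ,
      pow_mul]
    have hbr : 0 ≤ besselI1Coeff k * (r * (r ^ 2) ^ k) :=
      mul_nonneg (besselI1Coeff_pos k).le (by positivity)
    push_cast
    nlinarith [mul_nonneg (k.cast_nonneg (α := ℝ)) hbr, mul_nonneg (sq_nonneg (k : ℝ)) hbr]

noncomputable def besselI0SqCoeff (n : ℕ) : ℝ := (2 * n)! / (4 ^ n * (n ! : ℝ) ^ 4)

theorem besselI0SqCoeff_pos (n : ℕ) : 0 < besselI0SqCoeff n := by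
  unfold besselI0SqCoeff; positivity

theorem besselI0SqCoeff_zero : besselI0SqCoeff 0 = 1 := by
  simp [besselI0SqCoeff]

theorem sum_antidiagonal_besselI0Coeff_mul_besselI0Coeff (n : ℕ) :
    ∑ p ∈ antidiagonal n, besselI0Coeff p.1 * besselI0Coeff p.2 = besselI0SqCoeff n := by
  have hterm : ∀ p ∈ antidiagonal n, besselI0Coeff p.1 * besselI0Coeff p.2 =
      (4 ^ n)⁻¹ * ((p.1 ! * (p.2 + 0)! * (p.2 ! * (p.1 + 0)!) : ℝ))⁻¹ := by
    intro p hp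
    rw [← HasAntidiagonal.mem_antidiagonal.mp hp, besselI0Coeff, besselI0Coeff, pow_add]
    simp only [add_zero]
    field_simp
  rw [sum_congr rfl hterm, ← mul_sum, sum_antidiagonal_inv_factorial, besselI0SqCoeff]
  simp only [add_zero]
  field_simp

theorem sum_antidiagonal_besselI0Coeff_mul_besselI1Coeff (n : ℕ) :
    ∑ p ∈ antidiagonal n, besselI0Coeff p.1 * besselI1Coeff p.2 =
      (2 * n + 1) / (2 * (n + 1) ^ 2) * besselI0SqCoeff n := by
  have hterm : ∀ p ∈ antidiagonal n, besselI0Coeff p.1 * besselI1Coeff p.2 =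
      (2 * 4 ^ n)⁻¹ * ((p.1 ! * (p.2 + 1)! * (p.2 ! * (p.1 + 0)!) : ℝ))⁻¹ := by
    intro p hp
    rw [← HasAntidiagonal.mem_antidiagonal.mp hp, besselI0Coeff, besselI1Coeff, pow_add, pow_succ,
      pow_mul]
    simp only [add_zero]
    field_simp
    ring
  rw [sum_congr rfl hterm, ← mul_sum, sum_antidiagonal_inv_factorial, besselI0SqCoeff]
  simp only [add_zero]
  push_cast [Nat.factorial_succ]
  field_simp

theorem sum_antidiagonal_besselI1Coeff_mul_besselI1Coeff (n : ℕ) :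
    ∑ p ∈ antidiagonal n, besselI1Coeff p.1 * besselI1Coeff p.2 =
      (n + 1) / (n + 2) * besselI0SqCoeff (n + 1) := by
  have hterm : ∀ p ∈ antidiagonal n, besselI1Coeff p.1 * besselI1Coeff p.2 =
      (4 ^ (n + 1))⁻¹ * ((p.1 ! * (p.2 + 1)! * (p.2 ! * (p.1 + 1)!) : ℝ))⁻¹ := by
    intro p hp
    rw [← HasAntidiagonal.mem_antidiagonal.mp hp, besselI1Coeff, besselI1Coeff, pow_succ, pow_succ,
      pow_mul, pow_mul, pow_succ, pow_add]
    field_simp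
    ring
  rw [sum_congr rfl hterm, ← mul_sum, sum_antidiagonal_inv_factorial, besselI0SqCoeff,
    show 2 * (n + 1) = 2 * n + 1 + 1 by ring]
  push_cast [Nat.factorial_succ]
  field_simp
  ring

theorem hasSum_besselI0_mul_besselI0 (w : ℝ) :
    HasSum (fun n => besselI0SqCoeff n * (w ^ 2) ^ n) (besselI0 w * besselI0 w) := by
  simpa only [besselI0_eq_tsum, sum_antidiagonal_besselI0Coeff_mul_besselI0Coeff] using
    hasSum_tsum_mul_tsum_mul_even_pow (fun k => (besselI0Coeff_pos k).le)
      (fun k => (besselI0Coeff_pos k).le) (summable_besselI0Coeff_mul_pow w)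
      (summable_besselI0Coeff_mul_pow w)

theorem hasSum_besselI0_mul_besselI1Div (w : ℝ) :
    HasSum (fun n => (2 * n + 1) / (2 * (n + 1) ^ 2) * besselI0SqCoeff n * (w ^ 2) ^ n)
      (besselI0 w * besselI1Div w) := by
  simpa only [besselI0_eq_tsum, besselI1Div, sum_antidiagonal_besselI0Coeff_mul_besselI1Coeff] using
    hasSum_tsum_mul_tsum_mul_even_pow (fun k => (besselI0Coeff_pos k).le)
      (fun k => (besselI1Coeff_pos k).le) (summable_besselI0Coeff_mul_pow w)
      (summable_besselI1Coeff_mul_pow w)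

theorem hasSum_besselI1Div_mul_besselI1Div (w : ℝ) :
    HasSum (fun n => (n + 1) / (n + 2) * besselI0SqCoeff (n + 1) * (w ^ 2) ^ n)
      (besselI1Div w * besselI1Div w) := by
  simpa only [besselI1Div, sum_antidiagonal_besselI1Coeff_mul_besselI1Coeff] using
    hasSum_tsum_mul_tsum_mul_even_pow (fun k => (besselI1Coeff_pos k).le)
      (fun k => (besselI1Coeff_pos k).le) (summable_besselI1Coeff_mul_pow w)
      (summable_besselI1Coeff_mul_pow w)

theorem hasSum_besselI0_mul_sub_sq (w : ℝ) :
    HasSum (fun n => besselI0SqCoeff n / (2 * (n + 1) ^ 2) * (w ^ 2) ^ n)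
      (besselI0 w * (besselI0 w - besselI1Div w) - besselI1 w ^ 2) := by
  have hrest : HasSum (fun n => (besselI0SqCoeff n - (2 * n + 1) / (2 * (n + 1) ^ 2) *
      besselI0SqCoeff n - besselI0SqCoeff n / (2 * (n + 1) ^ 2)) * (w ^ 2) ^ n)
      (w ^ 2 * (besselI1Div w * besselI1Div w)) := by
    -- the coefficient vanishes at `n = 0`, and at `n + 1` it is the one of `T²` at `n`
    rw [← hasSum_nat_add_iff' 1, sum_range_one]
    norm_num [besselI0SqCoeff_zero]
    refine ((hasSum_besselI1Div_mul_besselI1Div w).mul_left (w ^ 2)).congr_fun fun n => ?_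
    rw [pow_succ']
    field_simp
    ring
  rw [show besselI0 w * (besselI0 w - besselI1Div w) - besselI1 w ^ 2 =
      besselI0 w * besselI0 w - besselI0 w * besselI1Div w -
        w ^ 2 * (besselI1Div w * besselI1Div w) by rw [besselI1_eq_mul]; ring]
  exact (((hasSum_besselI0_mul_besselI0 w).sub (hasSum_besselI0_mul_besselI1Div w)).sub
    hrest).congr_fun fun n => by ring

theorem iteratedDeriv_two_log_besselI0_eq (w : ℝ) :
    iteratedDeriv 2 (fun x => Real.log (besselI0 x)) w =
      (besselI0 w * (besselI0 w - besselI1Div w) - besselI1 w ^ 2) / besselI0 w ^ 2 := by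
  have hne (x : ℝ) : besselI0 x ≠ 0 := (zero_lt_one.trans_le (one_le_besselI0 x)).ne'
  have hlog : deriv (fun x => Real.log (besselI0 x)) = fun x => besselI1 x / besselI0 x :=
    funext fun x => ((hasDerivAt_besselI0 x).log (hne x)).deriv
  rw [iteratedDeriv_succ, iteratedDeriv_one, hlog,
    ((hasDerivAt_besselI1 w).fun_div (hasDerivAt_besselI0 w) (hne w)).deriv]
  ring

theorem one_half_le_besselI0_mul_sub_sq (w : ℝ) :
    1 / 2 ≤ besselI0 w * (besselI0 w - besselI1Div w) - besselI1 w ^ 2 := by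
  have h := le_hasSum (hasSum_besselI0_mul_sub_sq w) 0 fun n _ =>
    mul_nonneg (div_nonneg (besselI0SqCoeff_pos n).le (by positivity)) (by positivity)
  norm_num [besselI0SqCoeff_zero] at h
  linarith

theorem besselI0_mul_sub_sq_le (w : ℝ) :
    besselI0 w * (besselI0 w - besselI1Div w) - besselI1 w ^ 2 ≤ besselI0 w ^ 2 / 2 := by
  rw [show besselI0 w ^ 2 / 2 = besselI0 w * besselI0 w / 2 by ring]
  refine hasSum_le (fun n => ?_) (hasSum_besselI0_mul_sub_sq w)
    ((hasSum_besselI0_mul_besselI0 w).div_const 2)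
  have hn : (1 : ℝ) ≤ (n + 1) ^ 2 := one_le_pow₀ (by linarith [n.cast_nonneg (α := ℝ)])
  rw [mul_div_right_comm]
  gcongr
  · exact (besselI0SqCoeff_pos n).le
  · linarith

theorem iteratedDeriv_two_log_besselI0_general (w : ℝ) :
    0 < iteratedDeriv 2 (fun x => Real.log (besselI0 x)) w ∧
    iteratedDeriv 2 (fun x => Real.log (besselI0 x)) w ≤ 1 / 2 := by
  have hsq : 0 < besselI0 w ^ 2 := by have := one_le_besselI0 w; positivity
  have hlower := one_half_le_besselI0_mul_sub_sq w
  have hupper := besselI0_mul_sub_sq_le w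
  rw [iteratedDeriv_two_log_besselI0_eq]
  exact ⟨div_pos (by linarith) hsq, by rw [div_le_iff₀ hsq]; linarith⟩

/-- For every `w ≥ 0`, the second derivative of `log I0` satisfies
`0 < (log I0)''(w) ≤ 1/2`. -/
theorem iteratedDeriv_two_log_besselI0 (w : ℝ) (hw : 0 ≤ w) :
    0 < iteratedDeriv 2 (fun x => Real.log (besselI0 x)) w ∧
    iteratedDeriv 2 (fun x => Real.log (besselI0 x)) w ≤ 1 / 2 :=
  iteratedDeriv_two_log_besselI0_general w
end

section
/- For every real number w > 0, one has e^{−w} I₀(w) > 1/√(2πw) − 2/(π²w). Consequently, for every w > 32/π³ one has e^{−w} I₀(w) > 1/(2√(2πw)). -/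
/-!
Integrating the exponential series term by term gives `π I₀(w) = ∫₀^π e^{w cos x} dx`, so
`π e^{-w} I₀(w) = ∫₀^π e^{w (cos x - 1)} dx ≥ ∫₀^π e^{-w x²/2} dx` by `cos x ≥ 1 - x²/2`.
The Gaussian integral over `(0, ∞)` is `√(π / (2w))`, and its tail beyond `π` is less than
`2 / (π w)`, being dominated by `∫_π^∞ e^{-π w x / 2} dx`. Dividing by `π` gives the first bound;
the second follows because `2 / (π² w) < 1 / (2 √(2πw))` once `π³ w > 32`.
-/

open Real

open MeasureTheory Set Nat

theorem integral_cos_pow_two_mul (n : ℕ) :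
    ∫ x in (0 : ℝ)..π, cos x ^ (2 * n) = π * ((2 * n)! / (4 ^ n * (n ! : ℝ) ^ 2)) := by
  induction n with
  | zero => simp
  | succ k ih =>
    rw [show 2 * (k + 1) = 2 * k + 2 by ring, integral_cos_pow, ih, sin_pi, sin_zero,
      show 2 * k + 2 = 2 * k + 1 + 1 by ring, factorial_succ, factorial_succ, factorial_succ]
    push_cast
    field_simp
    ring

theorem integral_cos_pow_two_mul_add_one (n : ℕ) :
    ∫ x in (0 : ℝ)..π, cos x ^ (2 * n + 1) = 0 := by
  induction n with
  | zero => simp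
  | succ k ih =>
    rw [show 2 * (k + 1) + 1 = 2 * k + 1 + 2 by ring, integral_cos_pow, ih]
    simp

theorem hasSum_integral_exp_mul_cos (w : ℝ) :
    HasSum (fun k : ℕ => w ^ k / k ! * ∫ x in (0 : ℝ)..π, cos x ^ k)
      (∫ x in (0 : ℝ)..π, exp (w * cos x)) := by
  have h : HasSum (fun k : ℕ => ∫ x in (0 : ℝ)..π, (w * cos x) ^ k / k !)
      (∫ x in (0 : ℝ)..π, exp (w * cos x)) :=
    intervalIntegral.hasSum_integral_of_dominated_convergence (fun k _ => |w| ^ k / k !)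
    (fun k => (by fun_prop : Continuous _).aestronglyMeasurable)
    (fun k => .of_forall fun x _ => by
      rw [norm_div, norm_pow, norm_mul, Real.norm_natCast, Real.norm_eq_abs, Real.norm_eq_abs]
      gcongr
      exact mul_le_of_le_one_right (abs_nonneg w) (abs_cos_le_one x))
    (.of_forall fun _ _ => summable_pow_div_factorial |w|) intervalIntegrable_const
    (.of_forall fun x _ => by
      simpa [Real.exp_eq_exp_ℝ] using NormedSpace.expSeries_div_hasSum_exp (w * cos x))
  convert h using 2 with k
  rw [← intervalIntegral.integral_const_mul]
  congr 1 with x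
  ring

theorem integral_exp_mul_cos (w : ℝ) :
    ∫ x in (0 : ℝ)..π, exp (w * cos x) = π * besselI0 w := by
  have h := hasSum_integral_exp_mul_cos w
  -- only even powers of `cos` survive integration over `[0, π]`
  rw [← (mul_right_injective₀ (two_ne_zero' ℕ)).hasSum_iff] at h
  · have h' : HasSum (fun n : ℕ => π * (w ^ (2 * n) / (4 ^ n * (n ! : ℝ) ^ 2)))
        (∫ x in (0 : ℝ)..π, exp (w * cos x)) := by
      convert h using 2 with n
      simp only [Function.comp_apply, integral_cos_pow_two_mul]
      field_simp
    rw [← h'.tsum_eq, tsum_mul_left, besselI0]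
  · rintro k hk
    obtain ⟨n, rfl⟩ : Odd k :=
      Nat.not_even_iff_odd.mp fun ⟨n, hn⟩ => hk ⟨n, by dsimp only; omega⟩
    rw [integral_cos_pow_two_mul_add_one, mul_zero]

theorem integral_Ioi_exp_neg_mul_sq_lt {a b : ℝ} (ha : 0 < a) (hb : 0 < b) :
    ∫ x in Ioi a, exp (-b * x ^ 2) < 1 / (a * b) := by
  have hab : 0 < a * b := mul_pos ha hb
  calc ∫ x in Ioi a, exp (-b * x ^ 2)
      ≤ ∫ x in Ioi a, exp (-(a * b) * x) := by
        refine setIntegral_mono_on (integrable_exp_neg_mul_sq hb).integrableOn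
          (exp_neg_integrableOn_Ioi a hab) measurableSet_Ioi fun x hx => ?_
        rw [exp_le_exp]
        nlinarith [mul_le_mul_of_nonneg_left (le_of_lt hx) (mul_nonneg hb.le (ha.trans hx).le)]
    _ = exp (-(a * b) * a) / (a * b) := by
        rw [integral_exp_mul_Ioi (by linarith)]
        ring
    _ < 1 / (a * b) := by
        gcongr
        rw [exp_lt_one_iff]
        nlinarith

theorem sqrt_pi_div_two_sub_lt_integral_exp_neg_mul_sq {a b : ℝ} (ha : 0 < a) (hb : 0 < b) :
    √(π / b) / 2 - 1 / (a * b) < ∫ x in (0 : ℝ)..a, exp (-b * x ^ 2) := by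
  have hint : ∀ c, IntegrableOn (fun x => exp (-b * x ^ 2)) (Ioi c) := fun _ =>
    (integrable_exp_neg_mul_sq hb).integrableOn
  have hsplit := intervalIntegral.integral_interval_add_Ioi (hint 0) (hint a)
  rw [integral_gaussian_Ioi] at hsplit
  linarith [integral_Ioi_exp_neg_mul_sq_lt ha hb]

theorem integral_exp_neg_mul_sq_le_pi_mul_exp_neg_mul_besselI0 {w : ℝ} (hw : 0 ≤ w) :
    ∫ x in (0 : ℝ)..π, exp (-(w / 2) * x ^ 2) ≤ π * (exp (-w) * besselI0 w) := by
  rw [mul_left_comm, ← integral_exp_mul_cos, ← intervalIntegral.integral_const_mul]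
  refine intervalIntegral.integral_mono_on pi_pos.le
    (Continuous.intervalIntegrable (by fun_prop) _ _)
    (Continuous.intervalIntegrable (by fun_prop) _ _) fun x _ => ?_
  rw [← exp_add, exp_le_exp]
  nlinarith [one_sub_sq_div_two_le_cos (x := x)]

theorem one_div_sqrt_sub_lt_exp_neg_mul_besselI0 {w : ℝ} (hw : 0 < w) :
    1 / √(2 * π * w) - 2 / (π ^ 2 * w) < exp (-w) * besselI0 w := by
  have hgauss := sqrt_pi_div_two_sub_lt_integral_exp_neg_mul_sq pi_pos (half_pos hw)
  have hbessel := integral_exp_neg_mul_sq_le_pi_mul_exp_neg_mul_besselI0 hw.le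
  have hsqrt : √(π / (w / 2)) = 2 * π / √(2 * π * w) := by
    rw [eq_div_iff (by positivity), ← sqrt_mul (by positivity), show π / (w / 2) * (2 * π * w)
      = (2 * π) ^ 2 by field_simp, sqrt_sq (by positivity)]
  rw [← mul_lt_mul_iff_right₀ pi_pos]
  calc π * (1 / √(2 * π * w) - 2 / (π ^ 2 * w))
      = √(π / (w / 2)) / 2 - 1 / (π * (w / 2)) := by
        rw [hsqrt]
        field_simp
    _ < π * (exp (-w) * besselI0 w) := hgauss.trans_le hbessel

theorem two_div_pi_sq_mul_lt_one_div_two_mul_sqrt {w : ℝ} (hw : 32 / π ^ 3 < w) :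
    2 / (π ^ 2 * w) < 1 / (2 * √(2 * π * w)) := by
  have hw0 : 0 < w := (by positivity : (0 : ℝ) < 32 / π ^ 3).trans hw
  have h32 : 32 < π ^ 3 * w := by rwa [div_lt_iff₀ (by positivity), mul_comm] at hw
  have hsqrt : √(2 * π * w) < π ^ 2 * w / 4 := by
    rw [sqrt_lt' (by positivity)]
    nlinarith [pi_pos]
  rw [div_lt_div_iff₀ (by positivity) (by positivity)]
  linarith

/-- For every `w > 0`, `e^(−w) I0(w) > 1/√(2πw) − 2/(π^2 w)`; consequently, for every
`w > 32/π^3`, `e^(−w) I0(w) > 1/(2√(2πw))`. -/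
theorem exp_neg_mul_besselI0_lower_bound :
    (∀ w : ℝ, 0 < w →
      Real.exp (-w) * besselI0 w > 1 / Real.sqrt (2 * Real.pi * w) - 2 / (Real.pi ^ 2 * w)) ∧
    (∀ w : ℝ, 32 / Real.pi ^ 3 < w →
      Real.exp (-w) * besselI0 w > 1 / (2 * Real.sqrt (2 * Real.pi * w))) := by
  refine ⟨fun w hw => one_div_sqrt_sub_lt_exp_neg_mul_besselI0 hw, fun w hw => ?_⟩
  have hw0 : 0 < w := (by positivity : (0 : ℝ) < 32 / π ^ 3).trans hw
  have hhalf : 1 / √(2 * π * w) - 1 / (2 * √(2 * π * w)) = 1 / (2 * √(2 * π * w)) := by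
    have : 0 < √(2 * π * w) := by positivity
    field_simp
    ring
  linarith [one_div_sqrt_sub_lt_exp_neg_mul_besselI0 hw0,
    two_div_pi_sq_mul_lt_one_div_two_mul_sqrt hw]
end

section
/- For every real number w > 32/π³, one has −(1/2)·log w − log(8π) < log I₀(w) − w < 0. In particular, log I₀(w) − w = O(log w) as w → +∞. -/
open Real

/-!
Writing `x = w / 2` and `b k = x ^ k / k!`, the series of `I₀(w)` is `∑ b k ^ 2`, while
`∑ b k = eˣ`. Since every `b k ≤ eˣ`, this gives `I₀(w) < eˣ · eˣ = eʷ`. Conversely, `b` is `eˣ`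
times the Poisson distribution of mean and variance `x`, so by Chebyshev's inequality at least
`3/4` of its mass lies on the `≤ 4√x + 1` integers of `[x - 2√x, x + 2√x]`; Cauchy–Schwarz on that
window gives `(3/4 · eˣ)² ≤ (4√x + 1) · I₀(w)`, i.e. `I₀(w) ≳ eʷ / √w`.
-/

open Finset
open scoped Nat

lemma hasSum_pow_div_factorial (x : ℝ) : HasSum (fun k : ℕ => x ^ k / k !) (exp x) :=
  exp_eq_exp_ℝ ▸ NormedSpace.expSeries_div_hasSum_exp x

lemma hasSum_descFactorial_mul_pow_div_factorial (m : ℕ) (x : ℝ) :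
    HasSum (fun k : ℕ => (k.descFactorial m : ℝ) * (x ^ k / k !)) (x ^ m * exp x) := by
  have hshift (n : ℕ) :
      ((n + m).descFactorial m : ℝ) * (x ^ (n + m) / (n + m)!) = x ^ m * (x ^ n / n !) := by
    have hfac := Nat.factorial_mul_descFactorial (Nat.le_add_left m n)
    rw [Nat.add_sub_cancel] at hfac
    rw [← hfac]
    push_cast
    field_simp
    ring
  have hlow : ∑ i ∈ range m, (i.descFactorial m : ℝ) * (x ^ i / i !) = 0 :=
    sum_eq_zero fun i hi => by simp [Nat.descFactorial_eq_zero_iff_lt.mpr (mem_range.mp hi)]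
  refine (hasSum_nat_add_iff' m).mp ?_
  rw [hlow, sub_zero]
  simp only [hshift]
  exact (hasSum_pow_div_factorial x).mul_left (x ^ m)

lemma hasSum_sq_sub_mul_pow_div_factorial (x : ℝ) :
    HasSum (fun k : ℕ => ((k : ℝ) - x) ^ 2 * (x ^ k / k !)) (x * exp x) := by
  -- `(k - x)² = k(k - 1) + (1 - 2x) k + x²`, a combination of descending factorials
  have h := ((hasSum_descFactorial_mul_pow_div_factorial 2 x).add
    ((hasSum_descFactorial_mul_pow_div_factorial 1 x).mul_left (1 - 2 * x))).add
    ((hasSum_descFactorial_mul_pow_div_factorial 0 x).mul_left (x ^ 2))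
  convert h using 1
  · funext k
    simp only [Nat.cast_descFactorial_two, Nat.descFactorial_one, Nat.descFactorial_zero]
    push_cast
    ring
  · ring

lemma HasSum.le_sum_add_of_forall_notMem_le {ι : Type*} {f g : ι → ℝ} {a b : ℝ}
    (hf : HasSum f a) (hg : HasSum g b) (s : Finset ι) (hg0 : ∀ i, 0 ≤ g i)
    (hfg : ∀ i ∉ s, f i ≤ g i) : a ≤ ∑ i ∈ s, f i + b := by
  classical
  have hs : HasSum (fun i => if i ∈ s then f i else 0) (∑ i ∈ s, if i ∈ s then f i else 0) :=
    hasSum_sum_of_ne_finset_zero fun i hi => if_neg hi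
  rw [sum_ite_mem, inter_self] at hs
  refine hasSum_le (fun i => ?_) hf (hs.add hg)
  by_cases hi : i ∈ s
  · simpa [hi] using hg0 i
  · simpa [hi] using hfg i hi

lemma sq_le_sq_sub_of_notMem_Icc_ceil_floor {x r : ℝ} (hr : 0 ≤ r) {k : ℕ}
    (hk : k ∉ Icc ⌈x - r⌉₊ ⌊x + r⌋₊) : r ^ 2 ≤ ((k : ℝ) - x) ^ 2 := by
  rw [mem_Icc, not_and_or, not_le, not_le, Nat.lt_ceil] at hk
  rcases hk with hk | hk
  · nlinarith
  · nlinarith [Nat.lt_of_floor_lt hk]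

lemma card_Icc_ceil_floor_le {a b : ℝ} (hab : a ≤ b) (hb : 0 ≤ b) :
    (#(Icc ⌈a⌉₊ ⌊b⌋₊) : ℝ) ≤ b - a + 1 := by
  have hfloor : (⌊b⌋₊ : ℝ) ≤ b := Nat.floor_le hb
  have hceil : a ≤ ⌈a⌉₊ := Nat.le_ceil a
  rw [Nat.card_Icc]
  rcases le_total ⌈a⌉₊ (⌊b⌋₊ + 1) with h | h
  · rw [Nat.cast_sub h]
    push_cast
    linarith
  · rw [Nat.sub_eq_zero_of_le h, Nat.cast_zero]
    linarith

lemma exp_sub_div_sq_le_sum_Icc {x r : ℝ} (hx : 0 ≤ x) (hr : 0 < r) :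
    exp x - x * exp x / r ^ 2 ≤ ∑ k ∈ Icc ⌈x - r⌉₊ ⌊x + r⌋₊, x ^ k / k ! := by
  have h := (hasSum_pow_div_factorial x).le_sum_add_of_forall_notMem_le
    ((hasSum_sq_sub_mul_pow_div_factorial x).div_const (r ^ 2)) (Icc ⌈x - r⌉₊ ⌊x + r⌋₊)
    (fun k => by positivity) (fun k hk => ?_)
  · linarith
  · rw [le_div_iff₀ (by positivity), mul_comm]
    exact mul_le_mul_of_nonneg_right (sq_le_sq_sub_of_notMem_Icc_ceil_floor hr.le hk)
      (by positivity)

lemma sq_pow_div_factorial_le {x : ℝ} (hx : 0 ≤ x) (k : ℕ) :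
    (x ^ k / k !) ^ 2 ≤ exp x * (x ^ k / k !) := by
  rw [sq]
  exact mul_le_mul_of_nonneg_right (pow_div_factorial_le_exp _ hx k) (by positivity)

lemma summable_sq_pow_div_factorial {x : ℝ} (hx : 0 ≤ x) :
    Summable (fun k : ℕ => (x ^ k / k !) ^ 2) :=
  Summable.of_nonneg_of_le (fun k => sq_nonneg (x ^ k / k !)) (sq_pow_div_factorial_le hx)
    ((hasSum_pow_div_factorial x).summable.mul_left _)

lemma besselI0_eq_tsum_sq (w : ℝ) : besselI0 w = ∑' k : ℕ, ((w / 2) ^ k / k !) ^ 2 := by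
  unfold besselI0
  congr 1
  funext k
  rw [div_pow, ← pow_mul, mul_comm k 2, pow_mul, pow_mul, div_pow w 2 2, div_pow, div_div]
  norm_num

lemma besselI0_nonneg (w : ℝ) : 0 ≤ besselI0 w := by
  rw [besselI0_eq_tsum_sq]
  exact tsum_nonneg fun _ => sq_nonneg _

lemma besselI0_lt_exp {w : ℝ} (hw : 0 < w) : besselI0 w < exp w := by
  have hx : 0 ≤ w / 2 := by positivity
  rw [besselI0_eq_tsum_sq, show exp w = exp (w / 2) * exp (w / 2) by rw [← exp_add, add_halves]]
  refine hasSum_lt (i := 0) (sq_pow_div_factorial_le hx) ?_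
    (summable_sq_pow_div_factorial hx).hasSum ((hasSum_pow_div_factorial _).mul_left _)
  simpa using one_lt_exp_iff.mpr (half_pos hw)

lemma mul_exp_le_mul_besselI0 {w : ℝ} (hw : 0 < w) :
    9 / 16 * exp w ≤ (4 * √(w / 2) + 1) * besselI0 w := by
  set x := w / 2 with hx_def
  have hx : 0 < x := half_pos hw
  set F := Icc ⌈x - 2 * √x⌉₊ ⌊x + 2 * √x⌋₊
  have hmass : 3 / 4 * exp x ≤ ∑ k ∈ F, x ^ k / k ! := by
    have h := exp_sub_div_sq_le_sum_Icc hx.le (by positivity : 0 < 2 * √x)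
    have hvar : x * exp x / (2 * √x) ^ 2 = exp x / 4 := by
      rw [mul_pow, sq_sqrt hx.le]
      field_simp
      ring
    linarith
  have hcard : (#F : ℝ) ≤ 4 * √x + 1 := by
    have h := card_Icc_ceil_floor_le (a := x - 2 * √x) (b := x + 2 * √x)
      (by linarith [sqrt_nonneg x]) (by positivity)
    linarith
  have hsq : ∑ k ∈ F, (x ^ k / k !) ^ 2 ≤ besselI0 w := by
    rw [besselI0_eq_tsum_sq]
    exact (summable_sq_pow_div_factorial hx.le).sum_le_tsum F fun _ _ => sq_nonneg _
  calc 9 / 16 * exp w = (3 / 4 * exp x) ^ 2 := by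
        rw [mul_pow, sq (exp x), ← exp_add, hx_def, add_halves]
        norm_num
    _ ≤ (∑ k ∈ F, x ^ k / k !) ^ 2 := by gcongr
    _ ≤ #F * ∑ k ∈ F, (x ^ k / k !) ^ 2 := sq_sum_le_card_mul_sum_sq
    _ ≤ (4 * √x + 1) * besselI0 w := by gcongr

lemma exp_div_lt_besselI0 {w : ℝ} (hw : 1 ≤ w) : exp w / (8 * π * √w) < besselI0 w := by
  have hw0 : 0 < w := by linarith
  have hsqrt : 1 ≤ √w := one_le_sqrt.mpr hw
  have hwindow : 4 * √(w / 2) + 1 ≤ 5 * √w := by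
    linarith [sqrt_le_sqrt (by linarith : w / 2 ≤ w)]
  have h := (mul_exp_le_mul_besselI0 hw0).trans
    (mul_le_mul_of_nonneg_right hwindow (besselI0_nonneg w))
  rw [div_lt_iff₀ (by positivity)]
  nlinarith [pi_gt_three, exp_pos w]

lemma log_besselI0_sub_self_mem_Ioo {w : ℝ} (hw : 1 ≤ w) :
    log (besselI0 w) - w ∈ Set.Ioo (-(1 / 2) * log w - log (8 * π)) 0 := by
  have hw0 : 0 < w := by linarith
  have hsqrt : 0 < √w := sqrt_pos.mpr hw0
  have hlower := exp_div_lt_besselI0 hw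
  have hpos : 0 < exp w / (8 * π * √w) := by positivity
  have hlog_lower := log_lt_log hpos hlower
  have hlog_upper := log_lt_log (hpos.trans hlower) (besselI0_lt_exp hw0)
  rw [log_div (exp_ne_zero w) (by positivity), log_exp, log_mul (by positivity) hsqrt.ne',
    log_sqrt hw0.le] at hlog_lower
  rw [log_exp] at hlog_upper
  constructor <;> linarith

/-- For every `w > 32/π^3`, `−(1/2) log w − log(8π) < log I0(w) − w < 0`; in particular,
`log I0(w) − w = O(log w)` as `w → +∞`. -/
theorem log_besselI0_sub_self_bounds :
    (∀ w : ℝ, 32 / Real.pi ^ 3 < w →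
      -(1 / 2) * Real.log w - Real.log (8 * Real.pi) < Real.log (besselI0 w) - w ∧
        Real.log (besselI0 w) - w < 0) ∧
    (fun w : ℝ => Real.log (besselI0 w) - w) =O[Filter.atTop] Real.log := by
  have hthreshold : 1 ≤ 32 / π ^ 3 := by
    rw [le_div_iff₀ (by positivity)]
    linarith [pow_lt_pow_left₀ pi_lt_d2 pi_pos.le (by norm_num : 3 ≠ 0)]
  refine ⟨fun w hw => log_besselI0_sub_self_mem_Ioo (hthreshold.trans hw.le), ?_⟩
  refine Asymptotics.IsBigO.of_bound 2 ?_
  filter_upwards [Filter.eventually_ge_atTop (27 : ℝ)] with w hw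
  have hbounds := log_besselI0_sub_self_mem_Ioo (by linarith : 1 ≤ w)
  have hlog_pos : 0 < log w := log_pos (by linarith)
  have hlog_8pi : log (8 * π) ≤ log w := log_le_log (by positivity) (by nlinarith [pi_lt_d2])
  rw [norm_eq_abs, norm_eq_abs, abs_of_pos hlog_pos, abs_le]
  constructor <;> linarith [hbounds.1, hbounds.2]
end

section
/- Let N ≥ 1 and let a₁, …, a_N be positive real numbers. Define the numbers M_{2k} ≥ 0 by the everywhere-convergent expansion ∏_{i=1}^N I₀(a_i s) = ∑_{k≥0} M_{2k} s^{2k}/(2k)!, and set B₁ = (1/4)∑_{i=1}^N a_i² and M⁽⁰⁾_{2k} = (2k)!·B₁^k / k!. Then the ratios M_{2k}/M⁽⁰⁾_{2k} satisfy M_{2(k+1)}/M⁽⁰⁾_{2(k+1)} < M_{2k}/M⁽⁰⁾_{2k} for every integer k ≥ 1, and M_{2k}/M⁽⁰⁾_{2k} → 0 as k → ∞. -/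
open Real

/-!
With `x i = a i ^ 2 / 4`, the product `∏ i, I₀ (a i * s)` is `∑ₖ cₖ s^(2k)`, where `cₖ` is the
`k`-th coefficient of the power series `∏ i, ∑ₙ (x i)ⁿ zⁿ / (n!)²`; hence `M k = (2k)! cₖ` and
the `k`-th ratio is `cₖ k! / B₁ᵏ`. A single factor satisfies
`(n + 1) coeffₙ₊₁ = x i / (n + 1) · coeffₙ ≤ (x i - μ n) coeffₙ` as soon as `μ (n + 1) ≤ x i`,
and by the Leibniz rule such bounds add up along a product of series with nonnegative
coefficients. Taking `μ = m / (k + 1)` with `m = min x i` gives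
`(k + 1) cₖ₊₁ ≤ (B₁ - m k / (k + 1)) cₖ`, so from `k = 1` on each ratio is at most
`1 - m / (2 B₁) < 1` times the previous one.
-/

open Filter Topology Finset PowerSeries

theorem eq_zero_of_forall_hasSum_mul_pow {e : ℕ → ℝ}
    (h : ∀ y : ℝ, HasSum (fun n => e n * y ^ n) 0) : e = 0 := by
  have hp : HasFPowerSeriesOnBall 0 (FormalMultilinearSeries.ofScalars ℝ e) 0 1 :=
    { r_le := by
        refine (FormalMultilinearSeries.ofScalars ℝ e).le_radius_of_tendsto (r := 1) (l := 0) ?_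
        simpa [FormalMultilinearSeries.ofScalars_norm] using
          (h 1).summable.tendsto_atTop_zero.norm
      r_pos := one_pos
      hasSum := fun {y} _ => by
        simpa [FormalMultilinearSeries.ofScalars_apply_eq, mul_comm] using h y }
  exact (FormalMultilinearSeries.ofScalars_series_eq_zero (E := ℝ) (c := e)).mp
    hp.hasFPowerSeriesAt.eq_zero

theorem eq_of_forall_hasSum_mul_pow_two_mul {d e : ℕ → ℝ} {f : ℝ → ℝ}
    (hd : ∀ s, HasSum (fun k => d k * s ^ (2 * k)) (f s))
    (he : ∀ s, HasSum (fun k => e k * s ^ (2 * k)) (f s)) : d = e := by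
  let g : ℕ → ℝ := fun n => if Even n then (d - e) (n / 2) else 0
  have hg : g = 0 := eq_zero_of_forall_hasSum_mul_pow fun s => by
    simpa using HasSum.even_add_odd (f := fun n => g n * s ^ n) (m' := 0)
      (by simpa [g, ← sub_mul] using (hd s).sub (he s)) (by simp [g])
  funext k
  simpa [g, sub_eq_zero] using congrFun hg (2 * k)

theorem hasSum_sum_antidiagonal_mul_of_nonneg {f g : ℕ → ℝ} {a b : ℝ} (hf : HasSum f a)
    (hg : HasSum g b) (hf0 : 0 ≤ f) (hg0 : 0 ≤ g) :
    HasSum (fun n => ∑ kl ∈ antidiagonal n, f kl.1 * g kl.2) (a * b) := by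
  have hfg := hf.summable.mul_of_nonneg hg.summable hf0 hg0
  have h := (summable_sum_mul_antidiagonal_of_summable_mul hfg).hasSum
  rwa [← hf.summable.tsum_mul_tsum_eq_tsum_sum_antidiagonal hg.summable hfg, hf.tsum_eq,
    hg.tsum_eq] at h

namespace PowerSeries

theorem coeff_mul_nonneg {φ ψ : ℝ⟦X⟧} (hφ : ∀ n, 0 ≤ coeff n φ) (hψ : ∀ n, 0 ≤ coeff n ψ)
    (n : ℕ) : 0 ≤ coeff n (φ * ψ) := by
  rw [coeff_mul]
  exact sum_nonneg fun p _ => mul_nonneg (hφ _) (hψ _)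

theorem coeff_mul_pos {φ ψ : ℝ⟦X⟧} (hφ : ∀ n, 0 < coeff n φ) (hψ : ∀ n, 0 < coeff n ψ)
    (n : ℕ) : 0 < coeff n (φ * ψ) := by
  rw [coeff_mul]
  exact sum_pos (fun p _ => mul_pos (hφ _) (hψ _)) ⟨(n, 0), by simp⟩

theorem coeff_prod_nonneg {ι : Type*} (s : Finset ι) {φ : ι → ℝ⟦X⟧}
    (hφ : ∀ i ∈ s, ∀ n, 0 ≤ coeff n (φ i)) (n : ℕ) : 0 ≤ coeff n (∏ i ∈ s, φ i) :=
  prod_induction φ (fun ψ => ∀ n, 0 ≤ coeff n ψ) (fun _ _ => coeff_mul_nonneg)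
    (fun n => by rw [coeff_one]; split_ifs <;> norm_num) hφ n

theorem hasSum_coeff_mul_mul_pow {φ ψ : ℝ⟦X⟧} (hφ0 : ∀ n, 0 ≤ coeff n φ)
    (hψ0 : ∀ n, 0 ≤ coeff n ψ) {z a b : ℝ} (hz : 0 ≤ z)
    (hφ : HasSum (fun n => coeff n φ * z ^ n) a) (hψ : HasSum (fun n => coeff n ψ * z ^ n) b) :
    HasSum (fun n => coeff n (φ * ψ) * z ^ n) (a * b) := by
  convert hasSum_sum_antidiagonal_mul_of_nonneg hφ hψ
    (fun n => mul_nonneg (hφ0 n) (pow_nonneg hz n))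
    (fun n => mul_nonneg (hψ0 n) (pow_nonneg hz n)) using 2 with n
  rw [coeff_mul, sum_mul]
  refine sum_congr rfl fun p hp => ?_
  rw [← mem_antidiagonal.1 hp, pow_add]
  ring

theorem hasSum_coeff_prod_mul_pow {ι : Type*} (s : Finset ι) {φ : ι → ℝ⟦X⟧} {F : ι → ℝ} {z : ℝ}
    (hz : 0 ≤ z) (hφ0 : ∀ i ∈ s, ∀ n, 0 ≤ coeff n (φ i))
    (hφ : ∀ i ∈ s, HasSum (fun n => coeff n (φ i) * z ^ n) (F i)) :
    HasSum (fun n => coeff n (∏ i ∈ s, φ i) * z ^ n) (∏ i ∈ s, F i) := by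
  induction s using Finset.cons_induction with
  | empty =>
    rw [prod_empty, prod_empty]
    convert hasSum_ite_eq 0 (1 : ℝ) using 2 with n
    rw [coeff_one]
    split_ifs with h <;> simp [h]
  | cons i s hi ih =>
    simp only [prod_cons, forall_mem_cons] at hφ0 hφ ⊢
    exact hasSum_coeff_mul_mul_pow hφ0.1 (coeff_prod_nonneg s hφ0.2) hz hφ.1 (ih hφ0.2 hφ.2)

theorem coeff_derivative_mul_le {φ ψ : ℝ⟦X⟧} (hφ0 : ∀ n, 0 ≤ coeff n φ)
    (hψ0 : ∀ n, 0 ≤ coeff n ψ) {x y μ : ℝ} {K : ℕ}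
    (hφ : ∀ n ≤ K, coeff n (d⁄dX ℝ φ) ≤ (x - μ * n) * coeff n φ)
    (hψ : ∀ n ≤ K, coeff n (d⁄dX ℝ ψ) ≤ (y - μ * n) * coeff n ψ) :
    ∀ n ≤ K, coeff n (d⁄dX ℝ (φ * ψ)) ≤ (x + y - μ * n) * coeff n (φ * ψ) := by
  intro n hn
  have hleib : d⁄dX ℝ (φ * ψ) = d⁄dX ℝ φ * ψ + φ * d⁄dX ℝ ψ := by
    rw [Derivation.leibniz, smul_eq_mul, smul_eq_mul]
    ring
  rw [hleib, map_add, coeff_mul, coeff_mul, coeff_mul, ← sum_add_distrib, mul_sum]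
  refine sum_le_sum fun p hp => ?_
  have hpn := mem_antidiagonal.1 hp
  calc coeff p.1 (d⁄dX ℝ φ) * coeff p.2 ψ + coeff p.1 φ * coeff p.2 (d⁄dX ℝ ψ)
      ≤ (x - μ * p.1) * coeff p.1 φ * coeff p.2 ψ + coeff p.1 φ * ((y - μ * p.2) * coeff p.2 ψ) :=
        add_le_add (mul_le_mul_of_nonneg_right (hφ p.1 (by omega)) (hψ0 _))
          (mul_le_mul_of_nonneg_left (hψ p.2 (by omega)) (hφ0 _))
    _ = (x + y - μ * n) * (coeff p.1 φ * coeff p.2 ψ) := by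
        rw [← hpn]
        push_cast
        ring

theorem coeff_derivative_prod_le {ι : Type*} (s : Finset ι) {φ : ι → ℝ⟦X⟧} {x : ι → ℝ} {μ : ℝ}
    {K : ℕ} (hφ0 : ∀ i ∈ s, ∀ n, 0 ≤ coeff n (φ i))
    (hφ : ∀ i ∈ s, ∀ n ≤ K, coeff n (d⁄dX ℝ (φ i)) ≤ (x i - μ * n) * coeff n (φ i)) :
    ∀ n ≤ K, coeff n (d⁄dX ℝ (∏ i ∈ s, φ i))
      ≤ (∑ i ∈ s, x i - μ * n) * coeff n (∏ i ∈ s, φ i) := by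
  induction s using Finset.cons_induction with
  | empty =>
    intro n _
    rw [prod_empty, derivative_one, coeff_one]
    split_ifs with h <;> simp [h]
  | cons i s hi ih =>
    simp only [prod_cons, sum_cons, forall_mem_cons, add_sub_assoc] at hφ0 hφ ⊢
    simpa only [add_sub_assoc] using
      coeff_derivative_mul_le hφ0.1 (coeff_prod_nonneg s hφ0.2) hφ.1 (ih hφ0.2 hφ.2)

end PowerSeries

theorem hasSum_besselI0 (w : ℝ) :
    HasSum (fun k => (w ^ 2 / 4) ^ k / (k.factorial : ℝ) ^ 2) (besselI0 w) := by
  have hsum : Summable fun k => (w ^ 2 / 4) ^ k / (k.factorial : ℝ) ^ 2 :=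
    (Real.summable_pow_div_factorial (w ^ 2 / 4)).of_nonneg_of_le (fun k => by positivity)
      fun k => div_le_div_of_nonneg_left (by positivity) (by positivity)
        (le_self_pow₀ (by exact_mod_cast k.factorial_pos) two_ne_zero)
  convert hsum.hasSum using 1
  exact tsum_congr fun k => by rw [div_pow, pow_mul, div_div]

noncomputable def besselI0Series (x : ℝ) : ℝ⟦X⟧ :=
  PowerSeries.mk fun k => x ^ k / (k.factorial : ℝ) ^ 2

@[simp]
theorem coeff_besselI0Series (x : ℝ) (k : ℕ) :
    coeff k (besselI0Series x) = x ^ k / (k.factorial : ℝ) ^ 2 :=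
  coeff_mk _ _

theorem coeff_besselI0Series_nonneg {x : ℝ} (hx : 0 ≤ x) (k : ℕ) :
    0 ≤ coeff k (besselI0Series x) := by
  rw [coeff_besselI0Series]
  positivity

theorem coeff_besselI0Series_pos {x : ℝ} (hx : 0 < x) (k : ℕ) :
    0 < coeff k (besselI0Series x) := by
  rw [coeff_besselI0Series]
  positivity

theorem hasSum_coeff_besselI0Series_mul_pow (a s : ℝ) :
    HasSum (fun k => coeff k (besselI0Series (a ^ 2 / 4)) * (s ^ 2) ^ k) (besselI0 (a * s)) := by
  convert hasSum_besselI0 (a * s) using 2 with k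
  rw [coeff_besselI0Series]
  ring

theorem coeff_derivative_besselI0Series_le {x μ : ℝ} {K : ℕ} (hμ : 0 ≤ μ)
    (hμx : μ * (K + 1) ≤ x) :
    ∀ n ≤ K, coeff n (d⁄dX ℝ (besselI0Series x))
      ≤ (x - μ * n) * coeff n (besselI0Series x) := by
  intro n hn
  have hnK : (n : ℝ) ≤ K := by exact_mod_cast hn
  have hratio : x / (n + 1) ≤ x - μ * n := by
    rw [div_le_iff₀ (by positivity)]
    nlinarith [mul_le_mul_of_nonneg_left hnK hμ]
  calc coeff n (d⁄dX ℝ (besselI0Series x))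
      = x / (n + 1) * coeff n (besselI0Series x) := by
        rw [coeff_derivative, coeff_besselI0Series, coeff_besselI0Series, Nat.factorial_succ]
        push_cast
        field_simp
        ring
    _ ≤ (x - μ * n) * coeff n (besselI0Series x) :=
        mul_le_mul_of_nonneg_right hratio
          (coeff_besselI0Series_nonneg (by nlinarith) n)

section BesselProduct

variable {ι : Type*} [Fintype ι]

theorem hasSum_coeff_prod_besselI0Series_mul_pow (a : ι → ℝ) (s : ℝ) :
    HasSum (fun k => coeff k (∏ i, besselI0Series (a i ^ 2 / 4)) * s ^ (2 * k))
      (∏ i, besselI0 (a i * s)) := by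
  simpa only [pow_mul] using hasSum_coeff_prod_mul_pow univ (sq_nonneg s)
    (fun i _ => coeff_besselI0Series_nonneg (by positivity))
    (fun i _ => hasSum_coeff_besselI0Series_mul_pow (a i) s)

theorem coeff_prod_besselI0Series_pos [Nonempty ι] {x : ι → ℝ} (hx : ∀ i, 0 < x i) (k : ℕ) :
    0 < coeff k (∏ i, besselI0Series (x i)) :=
  prod_induction_nonempty _ (fun φ => ∀ n, 0 < coeff n φ) (fun _ _ => coeff_mul_pos)
    univ_nonempty (fun i _ => coeff_besselI0Series_pos (hx i)) k

theorem succ_mul_coeff_succ_prod_besselI0Series_le {x : ι → ℝ} {m : ℝ} (hm : 0 ≤ m)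
    (hx : ∀ i, m ≤ x i) (k : ℕ) :
    (k + 1) * coeff (k + 1) (∏ i, besselI0Series (x i))
      ≤ (∑ i, x i - m * k / (k + 1)) * coeff k (∏ i, besselI0Series (x i)) := by
  have h := coeff_derivative_prod_le univ (μ := m / (k + 1)) (K := k)
    (fun i _ => coeff_besselI0Series_nonneg (hm.trans (hx i)))
    (fun i _ => coeff_derivative_besselI0Series_le (by positivity)
      (by rw [div_mul_cancel₀ _ (by positivity)]; exact hx i)) k le_rfl
  rw [coeff_derivative, mul_comm] at h
  convert h using 3
  ring

end BesselProduct

theorem mul_factorial_div_pow_succ_le {c : ℕ → ℝ} {B m : ℝ} (hB : 0 < B) (hm : 0 ≤ m) {k : ℕ}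
    (hk : 1 ≤ k) (hc : 0 ≤ c k) (h : (k + 1) * c (k + 1) ≤ (B - m * k / (k + 1)) * c k) :
    c (k + 1) * (k + 1).factorial / B ^ (k + 1)
      ≤ (1 - m / (2 * B)) * (c k * k.factorial / B ^ k) := by
  have hk' : (1 : ℝ) ≤ k := by exact_mod_cast hk
  have hhalf : m / 2 ≤ m * k / (k + 1) := by
    rw [div_le_div_iff₀ two_pos (by positivity)]
    nlinarith
  have hfac : (0 : ℝ) < k.factorial := by exact_mod_cast k.factorial_pos
  calc c (k + 1) * (k + 1).factorial / B ^ (k + 1)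
      = (k + 1) * c (k + 1) * (k.factorial / B ^ (k + 1)) := by
        rw [Nat.factorial_succ]
        push_cast
        ring
    _ ≤ (B - m / 2) * c k * (k.factorial / B ^ (k + 1)) := by
        refine mul_le_mul_of_nonneg_right (h.trans ?_) (by positivity)
        exact mul_le_mul_of_nonneg_right (by linarith) hc
    _ = (1 - m / (2 * B)) * (c k * k.factorial / B ^ k) := by
        field_simp
        ring

theorem lt_and_tendsto_zero_of_le_mul {r : ℕ → ℝ} {q : ℝ} (hr : ∀ k, 0 < r k) (hq : q < 1)
    (h : ∀ k, 1 ≤ k → r (k + 1) ≤ q * r k) :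
    (∀ k, 1 ≤ k → r (k + 1) < r k) ∧ Tendsto r atTop (𝓝 0) := by
  refine ⟨fun k hk => (h k hk).trans_lt (mul_lt_of_lt_one_left (hr k) hq), ?_⟩
  refine (summable_of_ratio_norm_eventually_le hq ?_).tendsto_atTop_zero
  filter_upwards [eventually_ge_atTop 1] with k hk
  simpa only [Real.norm_of_nonneg (hr _).le] using h k hk

/-- Lemma 1 of the paper, for a finite product of Bessel factors: with
`∏ i, I0 (a i * s) = ∑_k M_{2k} s^(2k)/(2k)!`, `B₁ = (1/4) ∑ a i ^ 2` and
`M⁰_{2k} = (2k)! B₁^k / k!` (the moments of a normal distribution of variance `2B₁`),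
the ratios `M_{2k}/M⁰_{2k}` are strictly decreasing for `k ≥ 1` and tend to `0`. -/
theorem moment_ratios_decreasing_tendsto_zero (N : ℕ) (hN : 1 ≤ N)
    (a : Fin N → ℝ) (ha : ∀ i, 0 < a i)
    (M : ℕ → ℝ)
    (hM : ∀ s : ℝ, HasSum (fun k : ℕ => M k * s ^ (2 * k) / ((2 * k).factorial : ℝ))
      (∏ i, besselI0 (a i * s)))
    (B₁ : ℝ) (hB₁ : B₁ = (1 / 4) * ∑ i, (a i) ^ 2)
    (M₀ : ℕ → ℝ) (hM₀ : ∀ k, M₀ k = ((2 * k).factorial : ℝ) * B₁ ^ k / (k.factorial : ℝ)) :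
    (∀ k : ℕ, 1 ≤ k → M (k + 1) / M₀ (k + 1) < M k / M₀ k) ∧
    Filter.Tendsto (fun k : ℕ => M k / M₀ k) Filter.atTop (nhds 0) := by
  have : Nonempty (Fin N) := ⟨⟨0, hN⟩⟩
  set x : Fin N → ℝ := fun i => a i ^ 2 / 4
  set c : ℕ → ℝ := fun k => coeff k (∏ i, besselI0Series (x i))
  have hx : ∀ i, 0 < x i := fun i => by have := ha i; positivity
  obtain ⟨i₀, hi₀⟩ := Finite.exists_min x
  have hB : B₁ = ∑ i, x i := by
    rw [hB₁, mul_sum]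
    exact sum_congr rfl fun i _ => by ring
  have hBpos : 0 < B₁ := hB ▸ sum_pos (fun i _ => hx i) univ_nonempty
  have hMc : ∀ k, M k / (2 * k).factorial = c k := congrFun <|
    eq_of_forall_hasSum_mul_pow_two_mul (fun s => by simpa only [div_mul_eq_mul_div] using hM s)
      (hasSum_coeff_prod_besselI0Series_mul_pow a)
  have hratio : ∀ k, M k / M₀ k = c k * k.factorial / B₁ ^ k := fun k => by
    rw [hM₀, ← hMc]
    field_simp
  simp only [hratio]
  refine lt_and_tendsto_zero_of_le_mul (q := 1 - x i₀ / (2 * B₁))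
    (fun k => div_pos (mul_pos (coeff_prod_besselI0Series_pos hx k)
      (Nat.cast_pos.2 k.factorial_pos)) (pow_pos hBpos k))
    (sub_lt_self _ (div_pos (hx i₀) (by linarith))) fun k hk => ?_
  exact mul_factorial_div_pow_succ_le (c := c) hBpos (hx i₀).le hk
    (coeff_prod_besselI0Series_pos hx k).le
    (hB ▸ succ_mul_coeff_succ_prod_besselI0Series_le (hx i₀).le hi₀ k)
end

section
/- Let X₁, …, X_N be independent real random variables, each distributed with density f(x) = 1/(π√(1−x²)) on (−1, 1) (and 0 elsewhere), let a₁, …, a_N be positive real numbers, and let A ⊆ {1, …, N} with nonempty complement B. Write S_A = ∑_{i∈A} a_i and σ_B² = (1/2)∑_{i∈B} a_i². Then for every real v ≥ S_A, P( ∑_{i=1}^N a_i X_i > v ) ≤ exp( −(v − S_A)² / (2σ_B²) ). -/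
open Real MeasureTheory ProbabilityTheory

noncomputable def arcsineDensity (x : ℝ) : ℝ :=
  if |x| < 1 then 1 / (Real.pi * Real.sqrt (1 - x ^ 2)) else 0

/-!
An arcsine variable `X` is symmetric, lies in `[-1, 1]` and has `E X² = 1/2`. On `[-1, 1]`,
`cosh (t x) ≤ 1 + x² (cosh t - 1)`, so `E e^{tX} = E cosh (tX) ≤ 1 + (cosh t - 1)/2 = cosh² (t/2)
≤ e^{t²/4}`: `X` is sub-Gaussian with variance proxy `1/2`. For `i ∈ A` we only use
`a i * X i ≤ a i`, so the event forces `∑_{i ∉ A} a i * X i ≥ v - S_A`, whose probability is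
bounded by Hoeffding's inequality for independent sub-Gaussian variables.
-/

lemma convexOn_sinh_Ici : ConvexOn ℝ (Set.Ici 0) sinh := by
  refine MonotoneOn.convexOn_of_deriv (convex_Ici 0) continuous_sinh.continuousOn
    differentiable_sinh.differentiableOn ?_
  rw [Real.deriv_sinh, interior_Ici]
  intro x hx y hy hxy
  rwa [cosh_le_cosh, abs_of_pos hx, abs_of_pos hy]

lemma sinh_mul_le_mul_sinh {y u : ℝ} (hy₀ : 0 ≤ y) (hy₁ : y ≤ 1) (hu : 0 ≤ u) :
    sinh (y * u) ≤ y * sinh u := by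
  simpa using convexOn_sinh_Ici.2 (Set.mem_Ici.2 hu) (Set.self_mem_Ici) hy₀ (sub_nonneg.2 hy₁)
    (by ring)

lemma cosh_mul_le_one_add_sq_mul {x : ℝ} (hx : |x| ≤ 1) (t : ℝ) :
    cosh (t * x) ≤ 1 + x ^ 2 * (cosh t - 1) := by
  -- `cosh (2 z) = 1 + 2 sinh z ^ 2` reduces this to `sinh (|x| u) ≤ |x| sinh u` with `u = |t| / 2`
  have hcosh : ∀ z, cosh (2 * z) = 1 + 2 * sinh z ^ 2 := fun z => by
    rw [cosh_two_mul, cosh_sq']; ring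
  set u := |t| / 2 with hu_def
  have hu : 0 ≤ u := by positivity
  have hsinh := sinh_mul_le_mul_sinh (abs_nonneg x) hx hu
  have hsinh₀ : 0 ≤ sinh (|x| * u) := sinh_nonneg_iff.2 (by positivity)
  have hx' : cosh (t * x) = cosh (2 * (|x| * u)) := by
    rw [← cosh_abs, abs_mul, hu_def]; ring_nf
  have ht' : cosh t = cosh (2 * u) := by
    rw [← cosh_abs, hu_def]; ring_nf
  rw [hx', ht', hcosh, hcosh, ← sq_abs x]
  nlinarith [mul_le_mul hsinh hsinh hsinh₀ (mul_nonneg (abs_nonneg x) (sinh_nonneg_iff.2 hu))]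

lemma integrable_of_ae_abs_le_one {ν : Measure ℝ} [IsFiniteMeasure ν] (hν : ∀ᵐ x ∂ν, |x| ≤ 1)
    {f : ℝ → ℝ} (hf : Continuous f) : Integrable f ν := by
  obtain ⟨C, hC⟩ :=
    isCompact_Icc.exists_bound_of_continuousOn (s := Set.Icc (-1) 1) hf.continuousOn
  refine .of_bound hf.aestronglyMeasurable C ?_
  filter_upwards [hν] with x hx using hC x (abs_le.1 hx)

lemma integral_exp_mul_le_of_abs_le_one {ν : Measure ℝ} [IsProbabilityMeasure ν]
    [ν.IsNegInvariant] (hν : ∀ᵐ x ∂ν, |x| ≤ 1) (t : ℝ) :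
    ∫ x, exp (t * x) ∂ν ≤ 1 + (cosh t - 1) * ∫ x, x ^ 2 ∂ν := by
  have hint : ∀ s : ℝ, Integrable (fun x => exp (s * x)) ν := fun s =>
    integrable_of_ae_abs_le_one hν (by fun_prop)
  have hsq : Integrable (fun x : ℝ => x ^ 2) ν := integrable_of_ae_abs_le_one hν (by fun_prop)
  have hsymm : ∫ x, exp (t * x) ∂ν = ∫ x, cosh (t * x) ∂ν := by
    have hneg : ∫ x, exp (-t * x) ∂ν = ∫ x, exp (t * x) ∂ν := by
      simpa [mul_neg, neg_mul] using integral_neg_eq_self (fun x => exp (t * x)) ν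
    simp_rw [cosh_eq]
    rw [integral_div, integral_add (hint t) (by simpa using hint (-t))]
    simp only [← neg_mul, hneg]
    ring
  calc ∫ x, exp (t * x) ∂ν = ∫ x, cosh (t * x) ∂ν := hsymm
    _ ≤ ∫ x, (1 + x ^ 2 * (cosh t - 1)) ∂ν :=
      integral_mono_ae (integrable_of_ae_abs_le_one hν (by fun_prop))
        ((integrable_const 1).add (hsq.mul_const _))
        (by filter_upwards [hν] with x hx using cosh_mul_le_one_add_sq_mul hx t)
    _ = 1 + (cosh t - 1) * ∫ x, x ^ 2 ∂ν := by
      rw [integral_add (integrable_const 1) (hsq.mul_const _), integral_mul_const]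
      simp [mul_comm]

lemma arcsineDensity_nonneg (x : ℝ) : 0 ≤ arcsineDensity x := by
  unfold arcsineDensity; split_ifs <;> positivity

lemma arcsineDensity_neg (x : ℝ) : arcsineDensity (-x) = arcsineDensity x := by
  simp [arcsineDensity]

lemma arcsineDensity_eq_zero {x : ℝ} (hx : x ∉ Set.Ioo (-1) 1) : arcsineDensity x = 0 := by
  rw [arcsineDensity, if_neg (by rwa [abs_lt])]

lemma measurable_arcsineDensity : Measurable arcsineDensity :=
  Measurable.ite (measurableSet_lt measurable_abs measurable_const) (by fun_prop) measurable_const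

lemma hasDerivAt_arcsin_div_pi {x : ℝ} (hx : x ∈ Set.Ioo (-1) 1) :
    HasDerivAt (fun y => arcsin y / π) (arcsineDensity x) x := by
  have h := (hasDerivAt_arcsin hx.1.ne' hx.2.ne).div_const π
  refine h.congr_deriv ?_
  rw [arcsineDensity, if_pos (abs_lt.2 hx), div_div, mul_comm]

lemma integrable_arcsineDensity : Integrable arcsineDensity := by
  refine IntegrableOn.integrable_of_forall_notMem_eq_zero (s := Set.Ioc (-1) 1) ?_ ?_
  · exact intervalIntegral.integrableOn_deriv_of_nonneg (by fun_prop)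
      (fun x hx => hasDerivAt_arcsin_div_pi hx) (fun x _ => arcsineDensity_nonneg x)
  · exact fun x hx => arcsineDensity_eq_zero (fun h => hx (Set.Ioo_subset_Ioc_self h))

lemma integral_arcsineDensity : ∫ x, arcsineDensity x = 1 := by
  have hint : ∫ x in (-1)..1, arcsineDensity x = 1 := by
    rw [intervalIntegral.integral_eq_sub_of_hasDerivAt_of_le (by norm_num) (by fun_prop)
      (fun x hx => hasDerivAt_arcsin_div_pi hx) integrable_arcsineDensity.intervalIntegrable]
    rw [arcsin_one, arcsin_neg_one]
    field_simp; ring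
  rw [← hint, intervalIntegral.integral_of_le (by norm_num),
    setIntegral_eq_integral_of_forall_compl_eq_zero]
  exact fun x hx => arcsineDensity_eq_zero (fun h => hx (Set.Ioo_subset_Ioc_self h))

noncomputable def arcsineMeasure : Measure ℝ :=
  volume.withDensity fun x => ENNReal.ofReal (arcsineDensity x)

instance : IsProbabilityMeasure arcsineMeasure := by
  constructor
  rw [arcsineMeasure, withDensity_apply _ MeasurableSet.univ, Measure.restrict_univ,
    ← ofReal_integral_eq_lintegral_ofReal integrable_arcsineDensity
      (.of_forall arcsineDensity_nonneg), integral_arcsineDensity, ENNReal.ofReal_one]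

instance : arcsineMeasure.IsNegInvariant := by
  constructor
  ext s hs
  rw [Measure.neg, Measure.map_apply measurable_neg hs, arcsineMeasure,
    withDensity_apply _ hs, withDensity_apply _ (measurable_neg hs),
    ← (Measure.measurePreserving_neg volume).setLIntegral_comp_preimage hs
      (measurable_arcsineDensity.ennreal_ofReal)]
  simp_rw [arcsineDensity_neg]

lemma ae_abs_le_one_arcsineMeasure : ∀ᵐ x ∂arcsineMeasure, |x| ≤ 1 := by
  rw [arcsineMeasure, ae_withDensity_iff measurable_arcsineDensity.ennreal_ofReal]
  refine .of_forall fun x hx => ?_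
  by_contra h
  exact hx (by rw [arcsineDensity_eq_zero fun h' => h (abs_le.2 ⟨h'.1.le, h'.2.le⟩)]; simp)

lemma integral_arcsineMeasure (g : ℝ → ℝ) :
    ∫ x, g x ∂arcsineMeasure = ∫ x, arcsineDensity x * g x := by
  rw [arcsineMeasure, integral_withDensity_eq_integral_toReal_smul
    measurable_arcsineDensity.ennreal_ofReal (.of_forall fun _ => ENNReal.ofReal_lt_top)]
  simp_rw [ENNReal.toReal_ofReal (arcsineDensity_nonneg _), smul_eq_mul]

lemma arcsineDensity_mul_one_sub_sq (x : ℝ) :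
    arcsineDensity x * (1 - x ^ 2) = √(1 - x ^ 2) / π := by
  by_cases hx : |x| < 1
  · have hpos : 0 < 1 - x ^ 2 := by nlinarith [abs_lt.1 hx, sq_abs x, abs_nonneg x]
    rw [arcsineDensity, if_pos hx]
    field_simp
    rw [sq_sqrt hpos.le]
  · rw [arcsineDensity, if_neg hx, sqrt_eq_zero'.2 (by nlinarith [sq_abs x, abs_nonneg x])]
    simp

lemma integral_sq_arcsineMeasure : ∫ x, x ^ 2 ∂arcsineMeasure = 1 / 2 := by
  have hsqrt : ∫ x, √(1 - x ^ 2) = π / 2 := by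
    rw [← integral_sqrt_one_sub_sq, intervalIntegral.integral_of_le (by norm_num),
      setIntegral_eq_integral_of_forall_compl_eq_zero]
    intro x hx
    refine sqrt_eq_zero'.2 ?_
    simp only [Set.mem_Ioc, not_and_or, not_lt, not_le] at hx
    rcases hx with h | h <;> nlinarith
  have hmass : ∫ x, (1 - x ^ 2) ∂arcsineMeasure = 1 / 2 := by
    rw [integral_arcsineMeasure]
    simp_rw [arcsineDensity_mul_one_sub_sq]
    rw [integral_div, hsqrt]
    field_simp
  have hsq : Integrable (fun x : ℝ => x ^ 2) arcsineMeasure :=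
    integrable_of_ae_abs_le_one ae_abs_le_one_arcsineMeasure (by fun_prop)
  rw [integral_sub (integrable_const 1) hsq, integral_const, probReal_univ, one_smul] at hmass
  linarith

lemma hasSubgaussianMGF_arcsineMeasure : HasSubgaussianMGF id (1 / 2) arcsineMeasure where
  integrable_exp_mul t := integrable_of_ae_abs_le_one ae_abs_le_one_arcsineMeasure (by fun_prop)
  mgf_le t := by
    have hcosh : cosh t = 2 * cosh (t / 2) ^ 2 - 1 := by
      have h := cosh_two_mul (t / 2)
      rw [mul_div_cancel₀ t two_ne_zero] at h
      linarith [cosh_sq' (t / 2)]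
    calc mgf id arcsineMeasure t ≤ 1 + (cosh t - 1) * (1 / 2) := by
          rw [mgf, ← integral_sq_arcsineMeasure]
          exact integral_exp_mul_le_of_abs_le_one ae_abs_le_one_arcsineMeasure t
      _ = cosh (t / 2) ^ 2 := by rw [hcosh]; ring
      _ ≤ exp ((t / 2) ^ 2 / 2) ^ 2 := by gcongr; exact cosh_le_exp_half_sq _
      _ = exp ((1 / 2 : NNReal) * t ^ 2 / 2) := by
        rw [← exp_nat_mul]; push_cast; ring_nf

section ArcsineLaw

variable {Ω : Type*} [MeasurableSpace Ω] {μ : Measure Ω} {X : Ω → ℝ}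

lemma aemeasurable_of_map_eq_arcsineMeasure (hX : μ.map X = arcsineMeasure) :
    AEMeasurable X μ :=
  .of_map_ne_zero (by rw [hX]; exact IsProbabilityMeasure.ne_zero _)

lemma ae_abs_le_one_of_map_eq_arcsineMeasure (hX : μ.map X = arcsineMeasure) :
    ∀ᵐ ω ∂μ, |X ω| ≤ 1 :=
  ae_of_ae_map (aemeasurable_of_map_eq_arcsineMeasure hX) (hX ▸ ae_abs_le_one_arcsineMeasure)

lemma hasSubgaussianMGF_const_mul_of_map_eq_arcsineMeasure (hX : μ.map X = arcsineMeasure)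
    (r : ℝ) : HasSubgaussianMGF (fun ω => r * X ω) (r ^ 2 / 2).toNNReal μ := by
  convert ((HasSubgaussianMGF.id_map_iff (aemeasurable_of_map_eq_arcsineMeasure hX)).1
    (hX ▸ hasSubgaussianMGF_arcsineMeasure)).const_mul r using 1
  refine NNReal.eq ?_
  rw [Real.coe_toNNReal _ (by positivity)]
  -- `const_mul` builds its constant with an anonymous constructor, invisible to `NNReal.coe_mul`
  change _ = r ^ 2 * ((1 / 2 : NNReal) : ℝ)
  push_cast
  ring

end ArcsineLaw

theorem prob_sum_arcsine_gt_le_general {Ω : Type*} [MeasurableSpace Ω] (μ : Measure Ω)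
    [IsProbabilityMeasure μ] (N : ℕ) (X : Fin N → Ω → ℝ)
    (hdist : ∀ i, Measure.map (X i) μ =
      MeasureTheory.volume.withDensity (fun x => ENNReal.ofReal (arcsineDensity x)))
    (hindep : iIndepFun X μ)
    (a : Fin N → ℝ) (ha : ∀ i, 0 < a i) (A : Finset (Fin N))
    (v : ℝ) (hv : ∑ i ∈ A, a i ≤ v) :
    μ {ω | v < ∑ i, a i * X i ω} ≤
      ENNReal.ofReal
        (Real.exp (-(v - ∑ i ∈ A, a i) ^ 2 / (2 * ((1 / 2) * ∑ i ∈ Aᶜ, (a i) ^ 2)))) := by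
  classical
  have hA : ∀ᵐ ω ∂μ, ∑ i ∈ A, a i * X i ω ≤ ∑ i ∈ A, a i := by
    filter_upwards [ae_all_iff.2 fun i => ae_abs_le_one_of_map_eq_arcsineMeasure (hdist i)]
      with ω hω
    exact Finset.sum_le_sum fun i _ =>
      mul_le_of_le_one_right (ha i).le ((le_abs_self _).trans (hω i))
  have hsub : {ω | v < ∑ i, a i * X i ω} ≤ᵐ[μ]
      {ω | v - ∑ i ∈ A, a i ≤ ∑ i ∈ Aᶜ, a i * X i ω} := by
    filter_upwards [hA] with ω hω (hvω : v < ∑ i, a i * X i ω)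
    rw [← Finset.sum_add_sum_compl A] at hvω
    show v - ∑ i ∈ A, a i ≤ ∑ i ∈ Aᶜ, a i * X i ω
    linarith
  have hoeffding := HasSubgaussianMGF.measure_sum_ge_le_of_iIndepFun
    (hindep.comp (fun i x => a i * x) fun i => measurable_const_mul _)
    (fun i _ => hasSubgaussianMGF_const_mul_of_map_eq_arcsineMeasure (hdist i) (a i))
    (s := Aᶜ) (sub_nonneg.2 hv)
  calc μ {ω | v < ∑ i, a i * X i ω}
      ≤ μ {ω | v - ∑ i ∈ A, a i ≤ ∑ i ∈ Aᶜ, a i * X i ω} := measure_mono_ae hsub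
    _ = ENNReal.ofReal (μ.real {ω | v - ∑ i ∈ A, a i ≤ ∑ i ∈ Aᶜ, a i * X i ω}) :=
      (ofReal_measureReal).symm
    _ ≤ _ := by
      refine ENNReal.ofReal_le_ofReal (hoeffding.trans_eq ?_)
      rw [NNReal.coe_sum]
      simp_rw [Real.coe_toNNReal _ (by positivity : 0 ≤ a _ ^ 2 / 2)]
      rw [← Finset.sum_div, mul_div_cancel₀ _ two_ne_zero, one_div_mul_eq_div,
        mul_div_cancel₀ _ two_ne_zero]

/-- The Chernoff-type bound of Theorem 3 (inequality (2.15)): if `X_1, ..., X_N` are independent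
with the arcsine density, `a i > 0`, `A` has nonempty complement `B`,
`S_A = sum_{i in A} a i` and `sigma_B^2 = (1/2) * sum_{i in B} (a i)^2`, then for `v >= S_A`,
`P(sum_i a i * X i > v) <= exp (-(v - S_A)^2/(2 sigma_B^2))`. -/
theorem prob_sum_arcsine_gt_le {Ω : Type*} [MeasurableSpace Ω] (μ : Measure Ω)
    [IsProbabilityMeasure μ] (N : ℕ) (hN : 1 ≤ N) (X : Fin N → Ω → ℝ)
    (hmeas : ∀ i, Measurable (X i))
    (hdist : ∀ i, Measure.map (X i) μ =
      MeasureTheory.volume.withDensity (fun x => ENNReal.ofReal (arcsineDensity x)))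
    (hindep : iIndepFun X μ)
    (a : Fin N → ℝ) (ha : ∀ i, 0 < a i) (A : Finset (Fin N)) (hB : Aᶜ.Nonempty)
    (v : ℝ) (hv : ∑ i ∈ A, a i ≤ v) :
    μ {ω | v < ∑ i, a i * X i ω} ≤
      ENNReal.ofReal
        (Real.exp (-(v - ∑ i ∈ A, a i) ^ 2 / (2 * ((1 / 2) * ∑ i ∈ Aᶜ, (a i) ^ 2)))) :=
  prob_sum_arcsine_gt_le_general μ N X hdist hindep a ha A v hv
end

section
/- For every real number y and every real x with |x| ≤ 1, the series ∑_{k=1}^∞ (−1)^{k−1} (y + 1/(2k−1)) x^{2k} / (k(2k−1)) converges and equals (y − 1)·( 2x·arctan x − log(1 + x²) ) + 2x·∫₀^x (arctan w)/w dw, where the integrand (arctan w)/w is understood to take the value 1 at w = 0. -/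
/-!
For `|w| < 1`, `arctan w / w = ∑ (-1)^k w^(2k) / (2k+1)`. Substituting `w = x u` and integrating
`u^m` times this series over `u ∈ [0, 1]` termwise gives
`∫₀¹ u^m arctan(xu)/(xu) du = ∑ (-1)^k x^(2k) / ((2k+1)(2k+m+1))`; the interchange is justified by
the summability of the `L¹` norms of the terms, which is `O(1/k²)` even for `|x| = 1`, where the
series itself only converges conditionally. The case `m = 0` is `x⁻¹ ∫₀^x arctan w / w dw`, and
`m = 1` is `x⁻² ∫₀^x arctan w dw = x⁻² (x arctan x - log(1 + x²)/2)`. The series of the theorem is a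
combination of these two by partial fractions.
-/

open Real MeasureTheory Set

noncomputable def arctanDivSelf (w : ℝ) : ℝ := if w = 0 then 1 else arctan w / w

lemma mul_arctanDivSelf (w : ℝ) : w * arctanDivSelf w = arctan w := by
  rcases eq_or_ne w 0 with rfl | hw
  · simp
  · rw [arctanDivSelf, if_neg hw, mul_div_cancel₀ _ hw]

lemma hasSum_arctanDivSelf {w : ℝ} (hw : |w| < 1) :
    HasSum (fun k : ℕ => (-1) ^ k * w ^ (2 * k) / (2 * k + 1)) (arctanDivSelf w) := by
  rcases eq_or_ne w 0 with rfl | hw0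
  · convert hasSum_ite_eq 0 (1 : ℝ) using 1
    · funext k; rcases k with _ | k <;> simp
    · simp [arctanDivSelf]
  · rw [arctanDivSelf, if_neg hw0]
    refine ((Real.hasSum_arctan hw).div_const w).congr_fun fun k => ?_
    push_cast
    field_simp
    ring

theorem intervalIntegral.hasSum_integral_of_summable_integral_norm {ι E : Type*} [Countable ι]
    [NormedAddCommGroup E] [NormedSpace ℝ E] {a b : ℝ} (hab : a ≤ b) {F : ι → ℝ → E}
    {f : ℝ → E} (hF_int : ∀ i, IntervalIntegrable (F i) volume a b)
    (hF_sum : Summable fun i => ∫ u in a..b, ‖F i u‖)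
    (hf : ∀ u ∈ Ioo a b, HasSum (F · u) (f u)) :
    HasSum (fun i => ∫ u in a..b, F i u) (∫ u in a..b, f u) := by
  simp only [intervalIntegral.integral_of_le hab, integral_Ioc_eq_integral_Ioo] at hF_sum ⊢
  rw [setIntegral_congr_fun measurableSet_Ioo fun u hu => (hf u hu).tsum_eq.symm]
  exact MeasureTheory.hasSum_integral_of_summable_integral_norm
    (fun i => (hF_int i).1.mono_set Ioo_subset_Ioc_self) hF_sum

lemma summable_one_div_succ_sq : Summable fun k : ℕ => 1 / ((k : ℝ) + 1) ^ 2 := by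
  exact_mod_cast (summable_nat_add_iff 1).2 (Real.summable_one_div_nat_pow.2 one_lt_two)

lemma integral_const_mul_pow_zero_one (d : ℝ) (n : ℕ) :
    ∫ u in (0 : ℝ)..1, d * u ^ n = d / (n + 1) := by
  simp [integral_pow, div_eq_mul_inv]

lemma hasSum_integral_pow_mul_arctanDivSelf (m : ℕ) {x : ℝ} (hx : |x| ≤ 1) :
    HasSum (fun k : ℕ => (-1) ^ k * x ^ (2 * k) / ((2 * k + 1) * (2 * k + m + 1)))
      (∫ u in (0 : ℝ)..1, u ^ m * arctanDivSelf (x * u)) := by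
  set c : ℕ → ℝ := fun k => (-1) ^ k * x ^ (2 * k) / (2 * k + 1)
  have hterm (d : ℝ) (k : ℕ) : ∫ u in (0 : ℝ)..1, d * u ^ (2 * k + m) = d / (2 * k + m + 1) := by
    rw [integral_const_mul_pow_zero_one]
    push_cast
    ring
  refine (intervalIntegral.hasSum_integral_of_summable_integral_norm zero_le_one
    (F := fun k u => c k * u ^ (2 * k + m))
    (fun k => (by fun_prop : Continuous _).intervalIntegrable _ _) ?_ ?_).congr_fun ?_
  · have hnorm : ∀ k, ∫ u in (0 : ℝ)..1, ‖c k * u ^ (2 * k + m)‖ = |c k| / (2 * k + m + 1) := by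
      intro k
      rw [← hterm]
      refine intervalIntegral.integral_congr fun u hu => ?_
      rw [uIcc_of_le zero_le_one] at hu
      simp [abs_of_nonneg hu.1]
    have hc (k : ℕ) : |c k| ≤ 1 / (2 * k + 1) := by
      have : |x| ^ (2 * k) ≤ 1 := pow_le_one₀ (abs_nonneg x) hx
      simp only [c, abs_div, abs_mul, abs_pow, abs_neg, abs_one, one_pow, one_mul]
      rw [abs_of_pos (by positivity : (0:ℝ) < 2 * k + 1)]
      gcongr
    refine summable_one_div_succ_sq.of_nonneg_of_le (fun k => by rw [hnorm]; positivity)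
      fun k => ?_
    rw [hnorm]
    calc |c k| / (2 * k + m + 1) ≤ 1 / (2 * k + 1) / (2 * k + m + 1) := by gcongr; exact hc k
      _ ≤ 1 / ((k : ℝ) + 1) ^ 2 := by
        rw [div_div, one_div_le_one_div (by positivity) (by positivity)]
        nlinarith [(k.cast_nonneg : (0:ℝ) ≤ k), (m.cast_nonneg : (0:ℝ) ≤ m)]
  · intro u hu
    have hxu : |x * u| < 1 := by
      rw [abs_mul, abs_of_pos hu.1]
      nlinarith [abs_nonneg x, hu.1, hu.2]
    refine ((hasSum_arctanDivSelf hxu).mul_left (u ^ m)).congr_fun fun k => ?_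
    simp only [c]
    ring
  · intro k
    rw [hterm]
    simp only [c]
    field_simp

theorem integral_arctan (a b : ℝ) :
    ∫ w in a..b, arctan w =
      (b * arctan b - log (1 + b ^ 2) / 2) - (a * arctan a - log (1 + a ^ 2) / 2) := by
  refine intervalIntegral.integral_eq_sub_of_hasDerivAt
    (f := fun w => w * arctan w - log (1 + w ^ 2) / 2) (fun w _ => ?_)
    (continuous_arctan.intervalIntegrable a b)
  have hlog := ((hasDerivAt_pow 2 w).const_add 1).log (by positivity)
  refine (((hasDerivAt_id' w).mul (hasDerivAt_arctan w)).sub (hlog.div_const 2)).congr_deriv ?_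
  field_simp
  ring

lemma sq_mul_integral_mul_arctanDivSelf (x : ℝ) :
    x ^ 2 * ∫ u in (0 : ℝ)..1, u * arctanDivSelf (x * u) = x * arctan x - log (1 + x ^ 2) / 2 := by
  calc x ^ 2 * ∫ u in (0 : ℝ)..1, u * arctanDivSelf (x * u)
      = x * ∫ u in (0 : ℝ)..1, arctan (x * u) := by
        simp only [← intervalIntegral.integral_const_mul, ← mul_arctanDivSelf]
        congr 1 with u
        ring
    _ = ∫ w in x * 0..x * 1, arctan w := intervalIntegral.mul_integral_comp_mul_left _
    _ = x * arctan x - log (1 + x ^ 2) / 2 := by simp [integral_arctan]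

/-- The power-series identity underlying (2.26): for `|x| ≤ 1` and any real `y`,
`∑_{k≥1} (−1)^(k−1) (y + 1/(2k−1)) x^(2k) / (k(2k−1))`
`  = (y − 1)(2x arctan x − log(1+x²)) + 2x ∫₀^x (arctan w)/w dw`,
the integrand being understood to take the value `1` at `w = 0`. -/
theorem sum_arctan_log_identity (y x : ℝ) (hx : |x| ≤ 1) :
    HasSum
      (fun k : ℕ => (-1) ^ k * (y + 1 / (2 * (k : ℝ) + 1)) * x ^ (2 * (k + 1)) /
        (((k : ℝ) + 1) * (2 * (k : ℝ) + 1)))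
      ((y - 1) * (2 * x * Real.arctan x - Real.log (1 + x ^ 2)) +
        2 * x * ∫ w in (0 : ℝ)..x, if w = 0 then 1 else Real.arctan w / w) := by
  change HasSum _ (_ + 2 * x * ∫ w in (0 : ℝ)..x, arctanDivSelf w)
  have h₁ := hasSum_integral_pow_mul_arctanDivSelf 1 hx
  have h₀ := hasSum_integral_pow_mul_arctanDivSelf 0 hx
  simp only [pow_one, pow_zero, one_mul] at h₁ h₀
  set I₁ := ∫ u in (0 : ℝ)..1, u * arctanDivSelf (x * u)
  set I₀ := ∫ u in (0 : ℝ)..1, arctanDivSelf (x * u)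
  have hI₀ : ∫ w in (0 : ℝ)..x, arctanDivSelf w = x * I₀ := by
    simp [I₀, intervalIntegral.mul_integral_comp_mul_left]
  have hval : (y - 1) * (2 * x * arctan x - log (1 + x ^ 2)) +
      2 * x * ∫ w in (0 : ℝ)..x, arctanDivSelf w = 2 * (y - 1) * x ^ 2 * I₁ + 2 * x * x * I₀ := by
    linear_combination (-2 * (y - 1)) * sq_mul_integral_mul_arctanDivSelf x + 2 * x * hI₀
  rw [hval]
  -- partial fractions: `(y + 1/(2k+1)) / ((k+1)(2k+1)) = 2(y-1) / ((2k+1)(2k+2)) + 2 / (2k+1)²`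
  refine ((h₁.mul_left _).add (h₀.mul_left _)).congr_fun fun k => ?_
  push_cast
  field_simp
  ring
end

section
/- Let μ be a probability measure on ℝ such that ∫ e^{sv} dμ(v) < ∞ for every real s. Define L(s) = log ∫ e^{sv} dμ(v), V(s) = L'(s), and for each integer l ≥ 0 the tilted central moments H_l(s) = ( ∫ (v − V(s))^l e^{sv} dμ(v) ) / ( ∫ e^{sv} dμ(v) ). Then H₀ = 1, H₁ = 0, each H_l is differentiable on ℝ, and for every integer l ≥ 1 and every real s: H_{l+1}(s) = H_l'(s) + l·L''(s)·H_{l−1}(s). -/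
/-!
Write `H_l = G_l / M` with `G_l(s) = ∫ (v - V(s))^l e^{sv} dμ` and `M(s) = ∫ e^{sv} dμ`.
Differentiating under the integral sign (near `s` the derivative of the integrand is
dominated by a multiple of `e^{(s+2)v} + e^{(s-2)v}`, as `r^k ≤ k! e^r`) and writing
`v = (v - V) + V` gives `G_l' = G_{l+1} + V G_l - l V' G_{l-1}`, while `M' = V M` because `V = L' = M'/M`.
In the quotient rule for `G_l / M` the two `V G_l` terms cancel, and `V' = L''`.
-/

open Real MeasureTheory

/-- The cumulant generating function `L(s) = log ∫ e^(sv) dμ(v)` of a measure `μ` on `ℝ`. -/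
noncomputable def cgfOf (μ : Measure ℝ) (s : ℝ) : ℝ :=
  Real.log (∫ v, Real.exp (s * v) ∂μ)

/-- The `l`-th central moment `H_l(s)` of the exponentially tilted measure
`e^(sv) dμ(v) / ∫ e^(sv) dμ`, centered at `V(s) = L'(s)`. -/
noncomputable def tiltedMoment (μ : Measure ℝ) (l : ℕ) (s : ℝ) : ℝ :=
  (∫ v, (v - deriv (cgfOf μ) s) ^ l * Real.exp (s * v) ∂μ) / ∫ v, Real.exp (s * v) ∂μ

open ProbabilityTheory
open scoped Nat

lemma exp_two_mul_abs_add_le (s v : ℝ) :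
    exp (2 * |v| + s * v) ≤ exp ((s + 2) * v) + exp ((s - 2) * v) := by
  rcases le_total 0 v with hv | hv
  · rw [abs_of_nonneg hv, show 2 * v + s * v = (s + 2) * v by ring]
    exact le_add_of_nonneg_right (exp_pos _).le
  · rw [abs_of_nonpos hv, show 2 * -v + s * v = (s - 2) * v by ring]
    exact le_add_of_nonneg_left (exp_pos _).le

lemma abs_add_pow_mul_exp_le (k : ℕ) {R s x : ℝ} (v : ℝ) (hR : 0 ≤ R) (hx : |x - s| ≤ 1) :
    (|v| + R) ^ k * exp (x * v) ≤ k ! * exp R * (exp ((s + 2) * v) + exp ((s - 2) * v)) := by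
  have hpow : (|v| + R) ^ k ≤ k ! * exp (|v| + R) := by
    have := pow_div_factorial_le_exp (x := |v| + R) (by positivity) k
    rwa [div_le_iff₀' (by positivity)] at this
  have hxv : x * v ≤ |v| + s * v := by
    have : (x - s) * v ≤ |v| := by
      calc (x - s) * v ≤ |x - s| * |v| := by rw [← abs_mul]; exact le_abs_self _
        _ ≤ |v| := mul_le_of_le_one_left (abs_nonneg v) hx
    linarith
  calc (|v| + R) ^ k * exp (x * v) ≤ k ! * exp (|v| + R) * exp (|v| + s * v) := by
        gcongr
    _ = k ! * exp R * exp (2 * |v| + s * v) := by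
        rw [mul_assoc, mul_assoc, ← exp_add, ← exp_add]; ring_nf
    _ ≤ _ := by gcongr; exact exp_two_mul_abs_add_le s v

lemma abs_deriv_sub_pow_mul_exp_le (n : ℕ) {a b C s x : ℝ} (v : ℝ) (ha : |a| ≤ C) (hb : |b| ≤ C)
    (hx : |x - s| ≤ 1) :
    |(v * (v - a) ^ n - n * b * (v - a) ^ (n - 1)) * exp (x * v)| ≤
      ((n + 1)! + n * C * (n - 1)!) * exp C * (exp ((s + 2) * v) + exp ((s - 2) * v)) := by
  have hC : 0 ≤ C := (abs_nonneg a).trans ha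
  have hva : |v - a| ≤ |v| + C := (abs_sub _ _).trans (by gcongr)
  have hv : |v| ≤ |v| + C := le_add_of_nonneg_right hC
  calc |(v * (v - a) ^ n - n * b * (v - a) ^ (n - 1)) * exp (x * v)|
      ≤ (|v| * |v - a| ^ n + n * |b| * |v - a| ^ (n - 1)) * exp (x * v) := by
        rw [abs_mul, abs_of_pos (exp_pos _)]
        gcongr
        refine (abs_sub _ _).trans_eq ?_
        simp [abs_mul, abs_pow]
    _ ≤ ((|v| + C) ^ (n + 1) + n * C * (|v| + C) ^ (n - 1)) * exp (x * v) := by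
        rw [pow_succ']
        gcongr
    _ = (|v| + C) ^ (n + 1) * exp (x * v) + n * C * ((|v| + C) ^ (n - 1) * exp (x * v)) := by
        ring
    _ ≤ (n + 1)! * exp C * (exp ((s + 2) * v) + exp ((s - 2) * v)) +
          n * C * ((n - 1)! * exp C * (exp ((s + 2) * v) + exp ((s - 2) * v))) := by
        gcongr ?_ + _ * ?_ <;> exact abs_add_pow_mul_exp_le _ v hC hx
    _ = _ := by ring

section

variable {μ : Measure ℝ}

lemma integrable_exp_add_exp (hint : ∀ s : ℝ, Integrable (fun v => exp (s * v)) μ) (s : ℝ) :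
    Integrable (fun v => exp ((s + 2) * v) + exp ((s - 2) * v)) μ :=
  (hint _).add (hint _)

lemma integrable_sub_pow_mul_exp (hint : ∀ s : ℝ, Integrable (fun v => exp (s * v)) μ)
    (a : ℝ) (n : ℕ) (s : ℝ) : Integrable (fun v => (v - a) ^ n * exp (s * v)) μ := by
  refine ((integrable_exp_add_exp hint s).const_mul (n ! * exp |a|)).mono'
    (by fun_prop) (ae_of_all _ fun v => ?_)
  rw [norm_mul, norm_pow, Real.norm_eq_abs, Real.norm_of_nonneg (exp_pos _).le]
  calc |v - a| ^ n * exp (s * v) ≤ (|v| + |a|) ^ n * exp (s * v) := by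
        gcongr; exact abs_sub _ _
    _ ≤ _ := abs_add_pow_mul_exp_le n v (abs_nonneg a) (by simp)

noncomputable def expMoment (μ : Measure ℝ) (a : ℝ) (n : ℕ) (s : ℝ) : ℝ :=
  ∫ v, (v - a) ^ n * exp (s * v) ∂μ

lemma hasDerivAt_expMoment_comp (hint : ∀ s : ℝ, Integrable (fun v => exp (s * v)) μ)
    {c c' : ℝ → ℝ} (hc : ∀ x, HasDerivAt c (c' x) x) (hc' : Continuous c') (n : ℕ) (s : ℝ) :
    HasDerivAt (fun x => expMoment μ (c x) n x)
      (expMoment μ (c s) (n + 1) s + c s * expMoment μ (c s) n s -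
        n * c' s * expMoment μ (c s) (n - 1) s) s := by
  have hcont : Continuous c := continuous_iff_continuousAt.2 fun x => (hc x).continuousAt
  obtain ⟨C₁, hC₁⟩ := (isCompact_closedBall s 1).exists_bound_of_continuousOn hcont.continuousOn
  obtain ⟨C₂, hC₂⟩ := (isCompact_closedBall s 1).exists_bound_of_continuousOn hc'.continuousOn
  have hbound : ∀ᵐ v ∂μ, ∀ x ∈ Metric.ball s 1,
      ‖(v * (v - c x) ^ n - n * c' x * (v - c x) ^ (n - 1)) * exp (x * v)‖ ≤
        ((n + 1)! + n * max C₁ C₂ * (n - 1)!) * exp (max C₁ C₂) *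
          (exp ((s + 2) * v) + exp ((s - 2) * v)) := by
    refine ae_of_all _ fun v x hx => ?_
    have hx' : x ∈ Metric.closedBall s 1 := Metric.ball_subset_closedBall hx
    exact abs_deriv_sub_pow_mul_exp_le n v ((hC₁ x hx').trans (le_max_left _ _))
      ((hC₂ x hx').trans (le_max_right _ _)) (le_of_lt hx)
  have hderiv : ∀ᵐ v ∂μ, ∀ x ∈ Metric.ball s 1,
      HasDerivAt (fun x => (v - c x) ^ n * exp (x * v))
        ((v * (v - c x) ^ n - n * c' x * (v - c x) ^ (n - 1)) * exp (x * v)) x := by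
    exact ae_of_all _ fun v x _ =>
      ((((hc x).const_sub v).fun_pow n).mul (hasDerivAt_mul_const v).exp).congr_deriv (by ring)
  have key := hasDerivAt_integral_of_dominated_loc_of_deriv_le (Metric.ball_mem_nhds s one_pos)
    (Filter.Eventually.of_forall fun x => by fun_prop) (integrable_sub_pow_mul_exp hint (c s) n s)
    (by fun_prop) hbound ((integrable_exp_add_exp hint s).const_mul _) hderiv
  refine key.2.congr_deriv ?_
  have hsplit : (fun v => (v * (v - c s) ^ n - n * c' s * (v - c s) ^ (n - 1)) * exp (s * v)) =
      fun v => (v - c s) ^ (n + 1) * exp (s * v) + c s * ((v - c s) ^ n * exp (s * v)) -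
        n * c' s * ((v - c s) ^ (n - 1) * exp (s * v)) := by
    funext v; ring
  have hint' := integrable_sub_pow_mul_exp hint (c s)
  rw [hsplit,
    integral_sub ((hint' _ s).fun_add ((hint' n s).const_mul _)) ((hint' _ s).const_mul _),
    integral_add (hint' _ s) ((hint' n s).const_mul _), integral_const_mul, integral_const_mul]
  rfl

lemma cgfOf_eq_cgf : cgfOf μ = cgf (fun v => v) μ := rfl

lemma mem_interior_integrableExpSet_id (hint : ∀ s : ℝ, Integrable (fun v => exp (s * v)) μ)
    (s : ℝ) : s ∈ interior (integrableExpSet (fun v => v) μ) := by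
  rw [Set.eq_univ_of_forall (s := integrableExpSet (fun v => v) μ) hint, interior_univ]
  trivial

lemma contDiff_cgfOf (hint : ∀ s : ℝ, Integrable (fun v => exp (s * v)) μ) :
    ContDiff ℝ 2 (cgfOf μ) :=
  AnalyticOnNhd.contDiff fun s _ => analyticAt_cgf (mem_interior_integrableExpSet_id hint s)

lemma hasDerivAt_deriv_cgfOf (hint : ∀ s : ℝ, Integrable (fun v => exp (s * v)) μ) (s : ℝ) :
    HasDerivAt (deriv (cgfOf μ)) (iteratedDeriv 2 (cgfOf μ) s) s := by
  have hd := (contDiff_cgfOf hint).differentiable_iteratedDeriv 1 (by norm_num) s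
  rw [iteratedDeriv_one] at hd
  rw [iteratedDeriv_succ, iteratedDeriv_one]
  exact hd.hasDerivAt

lemma hasDerivAt_mgf_id [NeZero μ] (hint : ∀ s : ℝ, Integrable (fun v => exp (s * v)) μ)
    (s : ℝ) :
    HasDerivAt (mgf (fun v => v) μ) (deriv (cgfOf μ) s * mgf (fun v => v) μ s) s := by
  have hmem := mem_interior_integrableExpSet_id hint s
  rw [cgfOf_eq_cgf, deriv_cgf hmem, div_mul_cancel₀ _ (mgf_pos' (NeZero.ne μ) (hint s)).ne']
  exact hasDerivAt_mgf hmem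

lemma expMoment_zero (a s : ℝ) : expMoment μ a 0 s = mgf (fun v => v) μ s := by
  simp [expMoment, mgf]

lemma tiltedMoment_eq_div (l : ℕ) (s : ℝ) :
    tiltedMoment μ l s = expMoment μ (deriv (cgfOf μ) s) l s / mgf (fun v => v) μ s := rfl

lemma expMoment_deriv_cgfOf_one [NeZero μ] (hint : ∀ s : ℝ, Integrable (fun v => exp (s * v)) μ)
    (s : ℝ) : expMoment μ (deriv (cgfOf μ) s) 1 s = 0 := by
  have hmem := mem_interior_integrableExpSet_id hint s
  have hint₁ : Integrable (fun v => v * exp (s * v)) μ := by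
    simpa using integrable_sub_pow_mul_exp hint 0 1 s
  simp only [expMoment, pow_one, sub_mul]
  rw [integral_sub hint₁ ((hint s).const_mul _), integral_const_mul, cgfOf_eq_cgf,
    deriv_cgf hmem]
  exact sub_eq_zero.2 (div_mul_cancel₀ _ (mgf_pos' (NeZero.ne μ) (hint s)).ne').symm

lemma hasDerivAt_tiltedMoment [NeZero μ] (hint : ∀ s : ℝ, Integrable (fun v => exp (s * v)) μ)
    (n : ℕ) (s : ℝ) :
    HasDerivAt (tiltedMoment μ n)
      (tiltedMoment μ (n + 1) s - n * iteratedDeriv 2 (cgfOf μ) s * tiltedMoment μ (n - 1) s)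
      s := by
  have hM := (mgf_pos' (NeZero.ne μ) (hint s)).ne'
  have hG := hasDerivAt_expMoment_comp hint (hasDerivAt_deriv_cgfOf hint)
    ((contDiff_cgfOf hint).continuous_iteratedDeriv 2 le_rfl) n s
  refine (hG.div (hasDerivAt_mgf_id hint s) hM).congr_deriv ?_
  simp only [tiltedMoment_eq_div]
  field_simp
  ring

end

/-- The recursion of Section 8: `H_0 = 1`, `H_1 = 0`, each `H_l` is differentiable and
`H_{l+1}(s) = H_l'(s) + l * L''(s) * H_{l-1}(s)` for `l >= 1`. -/
theorem tiltedMoment_recursion (μ : Measure ℝ) [IsProbabilityMeasure μ]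
    (hint : ∀ s : ℝ, Integrable (fun v => Real.exp (s * v)) μ) :
    (∀ s : ℝ, tiltedMoment μ 0 s = 1) ∧
    (∀ s : ℝ, tiltedMoment μ 1 s = 0) ∧
    (∀ l : ℕ, Differentiable ℝ (tiltedMoment μ l)) ∧
    (∀ l : ℕ, 1 ≤ l → ∀ s : ℝ,
      tiltedMoment μ (l + 1) s =
        deriv (tiltedMoment μ l) s +
          l * iteratedDeriv 2 (cgfOf μ) s * tiltedMoment μ (l - 1) s) := by
  refine ⟨fun s => ?_, fun s => ?_, fun l s => (hasDerivAt_tiltedMoment hint l s).differentiableAt,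
    fun l _ s => ?_⟩
  · rw [tiltedMoment_eq_div, expMoment_zero, div_self (mgf_pos (hint s)).ne']
  · rw [tiltedMoment_eq_div, expMoment_deriv_cgfOf_one hint, zero_div]
  · rw [(hasDerivAt_tiltedMoment hint l s).deriv]
    ring
end
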